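/- arXiv:1904.02313 — 2 statements merged into one kernel-verified Lean document; each statement's English description precedes it below -/
import Mathlib

section
/- For relatively prime positive integers s and t, the number of partitions that are simultaneously s-core and t-core equals (1/(s+t)) * C(s+t, s), i.e. (s+t) divides C(s+t,s) and the count is C(s+t,s)/(s+t). -/
/-- A partition, given as a weakly decreasing sequence of natural numbers with
finite support.  `parts i` is the size of the `(i+1)`-st row (0-indexed). -/
structure YPartition where
  parts : ℕ → ℕ
  antitone : ∀ ⦃i j : ℕ⦄, i ≤ j → parts j ≤ parts i
  support_finite : ∃ N, ∀ i, N ≤ i → parts i = 0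

namespace YPartition

/-- The conjugate partition: `conj p j` is the number of rows having more than `j`
boxes, i.e. the length of the `(j+1)`-st column (0-indexed). -/
noncomputable def conj (p : YPartition) (j : ℕ) : ℕ :=
  Set.ncard {i : ℕ | j < p.parts i}

/-- `p.IsSelfConjugate` means the conjugate of `p` equals `p`. -/
def IsSelfConjugate (p : YPartition) : Prop :=
  ∀ j, p.conj j = p.parts j

/-- The hook length of the (0-indexed) box `(i, j)`; in 1-indexed terms this is
`λ_{i+1} + λ'_{j+1} - (i+1) - (j+1) + 1`. -/
noncomputable def hook (p : YPartition) (i j : ℕ) : ℕ :=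
  p.parts i + p.conj j - i - j - 1

/-- `p.IsCore t` means no hook length of a box of `p` is divisible by `t`. -/
def IsCore (p : YPartition) (t : ℕ) : Prop :=
  ∀ i j, j < p.parts i → ¬ (t ∣ p.hook i j)

/-- The set of main diagonal hook lengths of `p`. -/
noncomputable def MD (p : YPartition) : Set ℕ :=
  {h | ∃ i, i < p.parts i ∧ h = p.hook i i}

end YPartition

lemma lower_eq_Iio {A : Set ℕ} (hfin : A.Finite) (hdc : ∀ i ∈ A, ∀ j ≤ i, j ∈ A) :
    A = Set.Iio A.ncard := by
  rcases A.eq_empty_or_nonempty with h | h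
  · subst h; simp
  · have hne : hfin.toFinset.Nonempty := by
      rwa [Set.Finite.toFinset_nonempty]
    set m := hfin.toFinset.max' hne with hm
    have hA : A = Set.Iio (m + 1) := by
      ext i
      constructor
      · intro hi
        have := hfin.toFinset.le_max' i (by simpa using hi)
        simpa [Set.mem_Iio] using Nat.lt_succ_of_le this
      · intro hi
        have hmA : m ∈ A := by
          have := hfin.toFinset.max'_mem hne
          simpa using this
        exact hdc m hmA i (Nat.lt_succ_iff.mp hi)
    have : A.ncard = m + 1 := by
      rw [hA]
      rw [show Set.Iio (m+1) = (↑(Finset.Iio (m+1)) : Set ℕ) by simp]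
      rw [Set.ncard_coe_finset]
      simp
    rw [this, hA]


namespace Anderson
open YPartition

lemma conj_set_finite (p : YPartition) (j : ℕ) : {i : ℕ | j < p.parts i}.Finite := by
  obtain ⟨N, hN⟩ := p.support_finite
  apply Set.Finite.subset (Set.finite_Iio N)
  intro i hi
  simp only [Set.mem_setOf_eq] at hi
  by_contra h
  simp only [Set.mem_Iio, not_lt] at h
  rw [hN i h] at hi; omega

lemma galois (p : YPartition) (i j : ℕ) : j < p.parts i ↔ i < p.conj j := by
  have hfin := conj_set_finite p j
  have hdc : ∀ i ∈ {i : ℕ | j < p.parts i}, ∀ k ≤ i, k ∈ {i : ℕ | j < p.parts i} := by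
    intro i hi k hk
    exact lt_of_lt_of_le hi (p.antitone hk)
  have h := lower_eq_Iio hfin hdc
  constructor
  · intro hlt
    have : i ∈ Set.Iio (p.conj j) := by rw [conj, ← h]; exact hlt
    simpa using this
  · intro hlt
    have : i ∈ {i : ℕ | j < p.parts i} := by rw [h]; exact hlt
    exact this

lemma conj_anti (p : YPartition) {j j' : ℕ} (h : j ≤ j') : p.conj j' ≤ p.conj j := by
  apply Set.ncard_le_ncard _ (conj_set_finite p j)
  intro i hi
  simp only [Set.mem_setOf_eq] at hi ⊢
  omega

/-- The set of "beta numbers" of a partition, as a subset of ℤ. -/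
def SS (p : YPartition) : Set ℤ := {x | ∃ i : ℕ, (p.parts i : ℤ) - 1 - i = x}

lemma mem_SS_iff (p : YPartition) (x : ℤ) :
    x ∈ SS p ↔ ¬ ∃ j : ℕ, (j : ℤ) - p.conj j = x := by
  constructor
  · rintro ⟨i, hi⟩ ⟨j, hj⟩
    have hg := galois p i j
    have h1 : (p.parts i : ℤ) - 1 - i = x := hi
    have h2 : (j : ℤ) - p.conj j = x := hj
    rcases lt_or_ge j (p.parts i) with hlt | hge
    · have : i < p.conj j := hg.mp hlt
      have c1 : (j : ℤ) < p.parts i := by exact_mod_cast hlt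
      have c2 : (i : ℤ) < p.conj j := by exact_mod_cast this
      omega
    · have hge2 : p.conj j ≤ i := by
        by_contra hc
        push_neg at hc
        have := hg.mpr hc
        omega
      have c1 : (p.parts i : ℤ) ≤ j := by exact_mod_cast hge
      have c2 : (p.conj j : ℤ) ≤ i := by exact_mod_cast hge2
      omega
  · intro hne
    set L := p.conj 0 with hL
    by_cases hx : x + L < 0
    · refine ⟨(-1 - x).toNat, ?_⟩
      have hxneg : (0:ℤ) ≤ -1 - x := by
        have : (0:ℤ) ≤ L := by positivity
        omega
      have hcast : ((-1 - x).toNat : ℤ) = -1 - x := Int.toNat_of_nonneg hxneg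
      have hge : L ≤ (-1 - x).toNat := by omega
      have hz : p.parts ((-1 - x).toNat) = 0 := by
        by_contra hc
        have : 0 < p.parts ((-1-x).toNat) := Nat.pos_of_ne_zero hc
        have := (galois p _ 0).mp this
        omega
      rw [hz]
      push_cast
      omega
    · push_neg at hx
      -- x ≥ -L
      set B := (x + L).toNat + 1 with hB
      have hBc : (B : ℤ) = x + L + 1 := by
        have : ((x + L).toNat : ℤ) = x + L := Int.toNat_of_nonneg hx
        push_cast
        omega
      classical
      have hbound : ∀ m : ℕ, (m : ℤ) - p.conj m < x → m < B := by
        intro m hm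
        have h1 : p.conj m ≤ L := conj_anti p (Nat.zero_le m)
        have : (m : ℤ) - L < x := by
          have : (p.conj m : ℤ) ≤ L := by exact_mod_cast h1
          omega
        omega
      have hneq : ∀ m : ℕ, (m : ℤ) - p.conj m ≠ x := by
        intro m hm
        exact hne ⟨m, hm⟩
      have h0 : ((0:ℕ) : ℤ) - p.conj 0 < x := by
        have := hneq 0
        simp only [Nat.cast_zero, zero_sub] at this ⊢
        omega
      set P : ℕ → Prop := fun m => (m : ℤ) - p.conj m < x with hP
      set js := Nat.findGreatest P B with hjs
      have hspec : P js := Nat.findGreatest_spec (Nat.zero_le B) h0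
      have hgreat : ∀ m : ℕ, P m → m ≤ js := by
        intro m hm
        by_contra hc
        push_neg at hc
        exact absurd hm (Nat.findGreatest_is_greatest hc (Nat.le_of_lt (hbound m hm)))
      -- x ≤ js
      have hxle : x ≤ (js : ℤ) := by
        rcases le_or_gt x 0 with hx0 | hx0
        · have : (0:ℤ) ≤ js := Nat.cast_nonneg js
          omega
        · have hm : P x.toNat := by
            have hc : ((x.toNat : ℕ) : ℤ) = x := Int.toNat_of_nonneg (le_of_lt hx0)
            have := hneq x.toNat
            simp only [hP]
            have hcz : (0:ℤ) ≤ p.conj x.toNat := Nat.cast_nonneg _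
            omega
          have := hgreat _ hm
          have hc : ((x.toNat : ℕ) : ℤ) = x := Int.toNat_of_nonneg (le_of_lt hx0)
          exact hc ▸ (by exact_mod_cast this)
      -- f (js+1) > x
      have hsucc : x < ((js+1 : ℕ) : ℤ) - p.conj (js+1) := by
        have h1 := hneq (js+1)
        have h2 : ¬ P (js+1) := by
          intro hc
          have := hgreat _ hc
          omega
        simp only [hP] at h2
        push_neg at h2
        push_cast at h1 h2 ⊢
        omega
      set i := ((js : ℤ) - x).toNat with hi
      have hic : (i : ℤ) = (js : ℤ) - x := Int.toNat_of_nonneg (by omega)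
      have hc1 : p.conj (js+1) ≤ i := by
        have : ((p.conj (js+1) : ℕ) : ℤ) < (js:ℤ) + 1 - x := by
          push_cast at hsucc ⊢
          omega
        omega
      have hc2 : i < p.conj js := by
        have : (js : ℤ) - p.conj js < x := hspec
        omega
      have hp1 : js < p.parts i := (galois p i js).mpr hc2
      have hp2 : ¬ (js + 1 < p.parts i) := by
        intro hc
        have := (galois p i (js+1)).mp hc
        omega
      have hpe : p.parts i = js + 1 := by omega
      refine ⟨i, ?_⟩
      rw [hpe]
      push_cast
      omega

lemma hook_cast (p : YPartition) {i j : ℕ} (hj : j < p.parts i) :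
    (p.hook i j : ℤ) = (p.parts i : ℤ) + p.conj j - i - j - 1 := by
  have hg : i < p.conj j := (galois p i j).mp hj
  have h1 : i + j + 1 + 1 ≤ p.parts i + p.conj j := by omega
  have : p.hook i j = p.parts i + p.conj j - (i + j + 1) := by
    rw [hook]; omega
  rw [this]
  push_cast [Nat.cast_sub (by omega : i + j + 1 ≤ p.parts i + p.conj j)]
  ring

lemma isCore_iff (p : YPartition) (t : ℕ) (ht : 0 < t) :
    p.IsCore t ↔ ∀ x ∈ SS p, x - t ∈ SS p := by
  constructor
  · intro hcore x hx
    by_contra hnot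
    obtain ⟨i, hi⟩ := hx
    rw [mem_SS_iff] at hnot
    push_neg at hnot
    obtain ⟨j, hj⟩ := hnot
    have hjlt : j < p.parts i := by
      by_contra hc
      push_neg at hc
      have hge2 : p.conj j ≤ i := by
        by_contra hcc
        push_neg at hcc
        have := (galois p i j).mpr hcc
        omega
      have c1 : (p.parts i : ℤ) ≤ j := by exact_mod_cast hc
      have c2 : (p.conj j : ℤ) ≤ i := by exact_mod_cast hge2
      omega
    apply hcore i j hjlt
    have : (p.hook i j : ℤ) = t := by
      rw [hook_cast p hjlt]
      omega
    have : p.hook i j = t := by exact_mod_cast this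
    rw [this]
  · intro hcl i j hjlt hdvd
    have hg : i < p.conj j := (galois p i j).mp hjlt
    have hkey : ∀ m : ℕ, ((p.parts i : ℤ) - 1 - i) - m * t ∈ SS p := by
      intro m
      induction m with
      | zero => exact ⟨i, by push_cast; ring⟩
      | succ m ih =>
        have := hcl _ ih
        convert this using 1
        push_cast
        ring
    obtain ⟨k, hk⟩ := hdvd
    have hpos : 0 < p.hook i j := by
      rw [hook]
      omega
    have hkc : (p.hook i j : ℤ) = t * k := by exact_mod_cast hk
    have := hkey k
    rw [mem_SS_iff] at this
    apply this
    refine ⟨j, ?_⟩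
    have := hook_cast p hjlt
    have hco : (k:ℤ) * t = t * k := mul_comm _ _
    omega




/-- Bounded above and cofinite below. -/
def GoodS (S : Set ℤ) : Prop := (∃ b, ∀ x ∈ S, x ≤ b) ∧ (∃ a, ∀ x : ℤ, x ≤ a → x ∈ S)

open Classical in
noncomputable def emax (S : Set ℤ) : ℤ :=
  if h : (∃ z, z ∈ S) ∧ (∃ b : ℤ, ∀ z ∈ S, z ≤ b) then
    Classical.choose (Int.exists_greatest_of_bdd
      (by obtain ⟨b, hb⟩ := h.2; exact ⟨b, fun z hz => hb z hz⟩) h.1)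
  else 0

open Classical in
lemma emax_spec (S : Set ℤ) (h1 : ∃ z, z ∈ S) (h2 : ∃ b : ℤ, ∀ z ∈ S, z ≤ b) :
    emax S ∈ S ∧ ∀ z ∈ S, z ≤ emax S := by
  rw [emax, dif_pos ⟨h1, h2⟩]
  have := Classical.choose_spec (Int.exists_greatest_of_bdd
      (by obtain ⟨b, hb⟩ := (⟨h1, h2⟩ : _ ∧ _).2; exact ⟨b, fun z hz => hb z hz⟩)
      (⟨h1, h2⟩ : _ ∧ _).1)
  exact ⟨this.1, this.2⟩

lemma GoodS.nonempty {S : Set ℤ} (h : GoodS S) : ∃ z, z ∈ S := by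
  obtain ⟨a, ha⟩ := h.2
  exact ⟨a, ha a le_rfl⟩

lemma GoodS.emax_mem {S : Set ℤ} (h : GoodS S) : emax S ∈ S :=
  (emax_spec S h.nonempty h.1).1

lemma GoodS.le_emax {S : Set ℤ} (h : GoodS S) : ∀ z ∈ S, z ≤ emax S :=
  (emax_spec S h.nonempty h.1).2

lemma GoodS.cut {S : Set ℤ} (h : GoodS S) (y : ℤ) : GoodS {x ∈ S | x < y} := by
  obtain ⟨a, ha⟩ := h.2
  refine ⟨⟨y - 1, fun x hx => by have := hx.2; omega⟩, ⟨min a (y-1), fun x hx => ?_⟩⟩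
  exact ⟨ha x (by omega), by omega⟩

noncomputable def eseq (S : Set ℤ) : ℕ → ℤ
  | 0 => emax S
  | i+1 => emax {x ∈ S | x < eseq S i}

lemma eseq_mem {S : Set ℤ} (h : GoodS S) (i : ℕ) : eseq S i ∈ S := by
  cases i with
  | zero => exact h.emax_mem
  | succ i => exact ((h.cut (eseq S i)).emax_mem).1

lemma eseq_succ_lt {S : Set ℤ} (h : GoodS S) (i : ℕ) : eseq S (i+1) < eseq S i :=
  ((h.cut (eseq S i)).emax_mem).2

lemma le_eseq_zero {S : Set ℤ} (h : GoodS S) {x : ℤ} (hx : x ∈ S) : x ≤ eseq S 0 :=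
  h.le_emax x hx

lemma le_eseq_succ {S : Set ℤ} (h : GoodS S) {x : ℤ} (hx : x ∈ S) {i : ℕ}
    (hlt : x < eseq S i) : x ≤ eseq S (i+1) :=
  (h.cut (eseq S i)).le_emax x ⟨hx, hlt⟩

lemma eseq_le_sub {S : Set ℤ} (h : GoodS S) (i : ℕ) : eseq S i ≤ eseq S 0 - i := by
  induction i with
  | zero => simp
  | succ i ih =>
    have := eseq_succ_lt h i
    push_cast
    omega

lemma eseq_surj {S : Set ℤ} (h : GoodS S) {x : ℤ} (hx : x ∈ S) : ∃ i, eseq S i = x := by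
  have hex : ∃ i : ℕ, eseq S i < x := by
    refine ⟨(eseq S 0 - x + 1).toNat, ?_⟩
    have h1 := eseq_le_sub h ((eseq S 0 - x + 1).toNat)
    have h2 : ((eseq S 0 - x + 1).toNat : ℤ) ≥ eseq S 0 - x + 1 := Int.self_le_toNat _
    omega
  classical
  set i := Nat.find hex with hi
  have hlt : eseq S i < x := Nat.find_spec hex
  have hipos : i ≠ 0 := by
    intro h0
    rw [h0] at hlt
    exact absurd (le_eseq_zero h hx) (by omega)
  obtain ⟨j, hj2⟩ : ∃ j, i = j + 1 := ⟨i - 1, by omega⟩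
  rw [hj2] at hlt
  have hj : ¬ eseq S j < x := Nat.find_min hex (by omega)
  push_neg at hj
  rcases eq_or_lt_of_le hj with heq | hgt
  · exact ⟨j, heq.symm⟩
  · have := le_eseq_succ h hx hgt
    omega

lemma count_finite {S : Set ℤ} (h : GoodS S) (c : ℤ) : {y ∈ S | c < y}.Finite := by
  obtain ⟨b, hb⟩ := h.1
  apply Set.Finite.subset (Set.finite_Ioc c b)
  intro y hy
  exact ⟨hy.2, hb y hy.1⟩

lemma eseq_count {S : Set ℤ} (h : GoodS S) (i : ℕ) :
    {y ∈ S | eseq S i < y}.ncard = i := by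
  induction i with
  | zero =>
    have : {y ∈ S | eseq S 0 < y} = ∅ := by
      ext y
      simp only [Set.mem_setOf_eq, Set.mem_empty_iff_false, iff_false, not_and, not_lt]
      exact fun hy => le_eseq_zero h hy
    rw [this]; simp
  | succ i ih =>
    have hset : {y ∈ S | eseq S (i+1) < y} = insert (eseq S i) {y ∈ S | eseq S i < y} := by
      ext y
      simp only [Set.mem_setOf_eq, Set.mem_insert_iff]
      constructor
      · rintro ⟨hy, hlt⟩
        rcases lt_trichotomy y (eseq S i) with hc | hc | hc
        · have := le_eseq_succ h hy hc
          omega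
        · exact Or.inl hc
        · exact Or.inr ⟨hy, hc⟩
      · rintro (rfl | ⟨hy, hlt⟩)
        · exact ⟨eseq_mem h i, eseq_succ_lt h i⟩
        · exact ⟨hy, lt_trans (eseq_succ_lt h i) hlt⟩
    rw [hset, Set.ncard_insert_of_notMem (by simp) (count_finite h _), ih]

lemma eseq_of_count {S : Set ℤ} (h : GoodS S) {x : ℤ} (hx : x ∈ S) {i : ℕ}
    (hc : {y ∈ S | x < y}.ncard = i) : eseq S i = x := by
  obtain ⟨j, rfl⟩ := eseq_surj h hx
  rw [eseq_count h j] at hc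
  rw [hc]


variable {n : ℕ} [NeZero n]

/-- congruence condition on class-max function -/
def Cong (n : ℕ) (g : ZMod n → ℤ) : Prop := ∀ r : ZMod n, ((g r : ZMod n) = r)

def Sg (n : ℕ) (g : ZMod n → ℤ) : Set ℤ := {x | x ≤ g (x : ZMod n)}

def charge (n : ℕ) [NeZero n] (g : ZMod n → ℤ) : ℤ := ∑ r : ZMod n, g r / n

lemma npos : 0 < n := Nat.pos_of_ne_zero (NeZero.ne n)

lemma int_dvd_sub_of_cast_eq {x y : ℤ} (h : (x : ZMod n) = (y : ZMod n)) : (n:ℤ) ∣ x - y := by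
  have : ((x - y : ℤ) : ZMod n) = 0 := by push_cast [h]; ring
  exact (ZMod.intCast_zmod_eq_zero_iff_dvd _ n).mp this

lemma cast_eq_of_dvd {x y : ℤ} (h : (n:ℤ) ∣ x - y) : (x : ZMod n) = (y : ZMod n) := by
  have : ((x - y : ℤ) : ZMod n) = 0 := (ZMod.intCast_zmod_eq_zero_iff_dvd _ n).mpr h
  push_cast at this
  linear_combination (this : (x:ZMod n) - y = 0)

lemma goodS_Sg (g : ZMod n → ℤ) : GoodS (Sg n g) := by
  have hne : (Finset.univ.image g).Nonempty := by
    simp [Finset.univ_nonempty]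
  constructor
  · refine ⟨(Finset.univ.image g).max' hne, fun x hx => ?_⟩
    exact le_trans hx (Finset.le_max' _ _ (Finset.mem_image_of_mem g (Finset.mem_univ _)))
  · refine ⟨(Finset.univ.image g).min' hne, fun x hx => ?_⟩
    exact le_trans hx (Finset.min'_le _ _ (Finset.mem_image_of_mem g (Finset.mem_univ _)))

lemma g_mem_Sg {g : ZMod n → ℤ} (hg : Cong n g) (r : ZMod n) : g r ∈ Sg n g := by
  show g r ≤ g ((g r : ℤ) : ZMod n)
  rw [hg r]

lemma mem_Sg_iff {g : ZMod n → ℤ} (hg : Cong n g) (x : ℤ) :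
    x ∈ Sg n g ↔ ∃ r : ZMod n, ∃ k : ℕ, x = g r - n * k := by
  constructor
  · intro hx
    set r := ((x : ZMod n)) with hr
    have hd : (n:ℤ) ∣ g r - x := int_dvd_sub_of_cast_eq (by rw [hg r])
    obtain ⟨k, hk⟩ := hd
    have hk0 : 0 ≤ k := by
      have hxle : x ≤ g r := hx
      have : (0:ℤ) < n := by exact_mod_cast npos (n := n)
      nlinarith
    exact ⟨r, k.toNat, by rw [Int.toNat_of_nonneg hk0]; omega⟩
  · rintro ⟨r, k, rfl⟩
    show g r - n * k ≤ g (((g r - n * k : ℤ) : ZMod n))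
    have : ((g r - n * k : ℤ) : ZMod n) = r := by
      push_cast
      rw [hg r]
      simp [ZMod.natCast_self]
    rw [this]
    have : (0:ℤ) ≤ n * k := by positivity
    omega

/-- The main counting lemma: number of elements of `Sg` above `-K*n - 1`. -/
lemma count_Sg (g : ZMod n → ℤ) (hg : Cong n g) (K : ℕ)
    (hK : ∀ r : ZMod n, 0 ≤ g r / n + K) :
    ({y ∈ Sg n g | -((K:ℤ)*n) ≤ y}.ncard : ℤ) = (K:ℤ)*n + n + charge n g := by
  classical
  have hn : (0:ℤ) < n := by exact_mod_cast npos (n := n)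
  set F : Finset ℤ := Finset.univ.biUnion
    (fun r : ZMod n => (Finset.range (g r / n + K + 1).toNat).image (fun k : ℕ => g r - n * k))
    with hF
  have hcastr : ∀ (r : ZMod n) (k : ℕ), ((( g r - n * k : ℤ)) : ZMod n) = r := by
    intro r k
    push_cast
    rw [hg r]
    simp [ZMod.natCast_self]
  have hset : (↑F : Set ℤ) = {y ∈ Sg n g | -((K:ℤ)*n) ≤ y} := by
    ext y
    simp only [hF, Finset.coe_biUnion, Set.mem_iUnion, Finset.mem_coe, Finset.mem_image,
      Finset.mem_range, Finset.coe_univ, Set.mem_univ, true_implies, Set.mem_setOf_eq]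
    constructor
    · rintro ⟨r, _, k, hk, rfl⟩
      have hkle : (k:ℤ) ≤ g r / n + K := by
        have h1 : (0:ℤ) ≤ g r / n + K := hK r
        have h2 : ((g r / n + K + 1).toNat : ℤ) = g r / n + K + 1 := Int.toNat_of_nonneg (by omega)
        have := hk
        omega
      refine ⟨?_, ?_⟩
      · exact (mem_Sg_iff hg _).mpr ⟨r, k, rfl⟩
      · have hmod : 0 ≤ g r % n := Int.emod_nonneg _ (by omega)
        have hdiv : g r = n * (g r / n) + g r % n := (Int.mul_ediv_add_emod _ _).symm
        nlinarith [hkle]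
    · rintro ⟨hy, hyge⟩
      obtain ⟨r, k, rfl⟩ := (mem_Sg_iff hg y).mp hy
      refine ⟨r, trivial, k, ?_, rfl⟩
      have hkle : (k:ℤ) ≤ g r / n + K := by
        have h1 : (k:ℤ) * n ≤ g r + (K:ℤ) * n := by nlinarith
        have h2 : (k:ℤ) ≤ (g r + (K:ℤ) * n) / n := (Int.le_ediv_iff_mul_le hn).mpr h1
        rwa [Int.add_mul_ediv_right _ _ (by omega : (n:ℤ) ≠ 0)] at h2
      have h3 : ((g r / n + K + 1).toNat : ℤ) = g r / n + K + 1 := by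
        have := hK r
        exact Int.toNat_of_nonneg (by omega)
      omega
  have hcard : (F.card : ℤ) = (K:ℤ)*n + n + charge n g := by
    have hdisj : ∀ r ∈ (Finset.univ : Finset (ZMod n)), ∀ r' ∈ Finset.univ, r ≠ r' →
        Disjoint ((Finset.range (g r / n + K + 1).toNat).image (fun k : ℕ => g r - n * k))
          ((Finset.range (g r' / n + K + 1).toNat).image (fun k : ℕ => g r' - n * k)) := by
      intro r _ r' _ hne
      rw [Finset.disjoint_left]
      rintro a ha ha'
      obtain ⟨k, _, rfl⟩ := Finset.mem_image.mp ha
      obtain ⟨k', _, he⟩ := Finset.mem_image.mp ha'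
      apply hne
      have := hcastr r k
      rw [← he, hcastr r' k'] at this
      exact this.symm
    rw [hF, Finset.card_biUnion hdisj]
    have himg : ∀ r : ZMod n,
        ((Finset.range (g r / n + K + 1).toNat).image (fun k : ℕ => g r - n * k)).card
          = (g r / n + K + 1).toNat := by
      intro r
      have hinj : Function.Injective (fun k : ℕ => g r - (n:ℤ) * k) := by
        intro a b hab
        simp only at hab
        have : (n:ℤ) * a = n * b := by omega
        have := mul_left_cancel₀ (by omega : (n:ℤ) ≠ 0) this
        exact_mod_cast this
      rw [Finset.card_image_of_injective _ hinj, Finset.card_range]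
    have h1 : (∑ r : ZMod n, ((Finset.range (g r / n + K + 1).toNat).image
        (fun k : ℕ => g r - n * k)).card) = ∑ r : ZMod n, (g r / n + K + 1).toNat :=
      Finset.sum_congr rfl (fun r _ => himg r)
    rw [h1]
    rw [Nat.cast_sum]
    have h2 : (∑ r : ZMod n, ((g r / n + K + 1).toNat : ℤ))
        = ∑ r : ZMod n, (g r / n + K + 1) := by
      apply Finset.sum_congr rfl
      intro r _
      have := hK r
      exact Int.toNat_of_nonneg (by omega)
    rw [h2, Finset.sum_add_distrib, Finset.sum_add_distrib]
    simp only [Finset.sum_const, Finset.card_univ]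
    have hcardu : Fintype.card (ZMod n) = n := ZMod.card n
    rw [hcardu]
    unfold charge
    push_cast
    ring
  rw [← hset, Set.ncard_coe_finset, hcard]
end Anderson

section Part6
namespace Anderson
open YPartition

variable {n : ℕ} [NeZero n]

lemma goodS_SS (p : YPartition) : GoodS (SS p) := by
  obtain ⟨N, hN⟩ := p.support_finite
  constructor
  · refine ⟨(p.parts 0 : ℤ) - 1, ?_⟩
    rintro x ⟨i, rfl⟩
    have := p.antitone (Nat.zero_le i)
    have h2 : (0:ℤ) ≤ i := by positivity
    have h3 : (p.parts i : ℤ) ≤ p.parts 0 := by exact_mod_cast this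
    omega
  · refine ⟨-1 - N, ?_⟩
    intro x hx
    refine ⟨(-1 - x).toNat, ?_⟩
    have h1 : (0:ℤ) ≤ -1 - x := by omega
    have h2 : ((-1 - x).toNat : ℤ) = -1 - x := Int.toNat_of_nonneg h1
    have h3 : N ≤ (-1 - x).toNat := by omega
    rw [hN _ h3]
    push_cast
    omega

/-- the beta-numbers of `p` in decreasing order are exactly `eseq (SS p)`. -/
lemma eseq_SS (p : YPartition) (i : ℕ) : eseq (SS p) i = (p.parts i : ℤ) - 1 - i := by
  have hgood := goodS_SS p
  have hbmono : ∀ j k : ℕ, j ≤ k → (p.parts k : ℤ) - 1 - k ≤ (p.parts j : ℤ) - 1 - j - (k - j) := by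
    intro j k hjk
    have := p.antitone hjk
    have h1 : (p.parts k : ℤ) ≤ p.parts j := by exact_mod_cast this
    have h2 : (j:ℤ) ≤ k := by exact_mod_cast hjk
    omega
  induction i with
  | zero =>
    have he : eseq (SS p) 0 = emax (SS p) := rfl
    apply le_antisymm
    · obtain ⟨j, hj⟩ := hgood.emax_mem
      rw [he, ← hj]
      have := hbmono 0 j (Nat.zero_le j)
      push_cast at this ⊢
      omega
    · rw [he]
      exact hgood.le_emax _ ⟨0, rfl⟩
  | succ i ih =>
    have hcut := hgood.cut (eseq (SS p) i)
    have he : eseq (SS p) (i+1) = emax {x ∈ SS p | x < eseq (SS p) i} := rfl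
    apply le_antisymm
    · have hmem := hcut.emax_mem
      obtain ⟨j, hj⟩ := hmem.1
      have hlt : emax {x ∈ SS p | x < eseq (SS p) i} < eseq (SS p) i := hmem.2
      rw [← hj] at hlt; rw [ih] at hlt
      rw [he, ← hj]
      have hji : i < j := by
        by_contra hc
        push_neg at hc
        have := hbmono j i hc
        omega
      have := hbmono (i+1) j hji
      push_cast at this ⊢
      omega
    · rw [he]
      apply hcut.le_emax
      refine ⟨⟨i+1, rfl⟩, ?_⟩
      rw [ih]
      have := hbmono i (i+1) (Nat.le_succ i)
      push_cast at this ⊢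
      omega

/-- class-maximum function of a partition -/
noncomputable def gp (n : ℕ) (p : YPartition) : ZMod n → ℤ :=
  fun r => emax {x ∈ SS p | (x : ZMod n) = r}

lemma class_nonempty (p : YPartition) (r : ZMod n) :
    ∃ z, z ∈ {x ∈ SS p | (x : ZMod n) = r} := by
  obtain ⟨a, ha⟩ := (goodS_SS p).2
  have hnpos : 0 < n := npos
  refine ⟨(r.val : ℤ) - n * ((r.val : ℤ) - a).toNat, ⟨ha _ ?_, ?_⟩⟩
  · have h2 : (((r.val:ℤ) - a).toNat : ℤ) ≥ (r.val:ℤ) - a := Int.self_le_toNat _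
    have h3 : (1:ℤ) ≤ n := by exact_mod_cast hnpos
    have h4 : (0:ℤ) ≤ (((r.val:ℤ) - a).toNat : ℤ) := by positivity
    nlinarith
  · push_cast
    simp [ZMod.natCast_val, ZMod.cast_id, ZMod.natCast_self]

lemma class_bdd (p : YPartition) (r : ZMod n) :
    ∃ b : ℤ, ∀ z ∈ {x ∈ SS p | (x : ZMod n) = r}, z ≤ b := by
  obtain ⟨b, hb⟩ := (goodS_SS p).1
  exact ⟨b, fun z hz => hb z hz.1⟩

lemma gp_mem (p : YPartition) (r : ZMod n) :
    gp n p r ∈ SS p ∧ ((gp n p r : ZMod n) = r) ∧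
      ∀ x ∈ SS p, (x : ZMod n) = r → x ≤ gp n p r := by
  have := emax_spec _ (class_nonempty p r) (class_bdd p r)
  exact ⟨this.1.1, this.1.2, fun x hx hc => this.2 x ⟨hx, hc⟩⟩

lemma cong_gp (p : YPartition) : Cong n (gp n p) := fun r => (gp_mem p r).2.1

lemma SS_eq_Sg_gp (p : YPartition) (hcl : ∀ x ∈ SS p, x - n ∈ SS p) :
    SS p = Sg n (gp n p) := by
  ext x
  constructor
  · intro hx
    exact (gp_mem p _).2.2 x hx rfl
  · intro hx
    have hg := cong_gp (n := n) p
    obtain ⟨r, k, rfl⟩ := (mem_Sg_iff hg x).mp hx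
    have : ∀ m : ℕ, gp n p r - n * m ∈ SS p := by
      intro m
      induction m with
      | zero => simpa using (gp_mem (n := n) p r).1
      | succ m ih =>
        have h2 : gp n p r - (n:ℤ) * ((m:ℤ)+1) = (gp n p r - n * m) - n := by ring
        push_cast
        rw [h2]
        exact hcl _ ih
    exact this k

end Anderson
end Part6
section Part6b
namespace Anderson
open YPartition

variable {n : ℕ} [NeZero n]

lemma eseq_anti' {S : Set ℤ} (h : GoodS S) {i j : ℕ} (hij : i ≤ j) :
    eseq S j + (j:ℤ) ≤ eseq S i + i := by
  induction j with
  | zero =>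
    have : i = 0 := Nat.le_zero.mp hij
    subst this; rfl
  | succ j ih =>
    rcases Nat.lt_or_ge i (j+1) with hlt | hge
    · have h1 := ih (Nat.lt_succ_iff.mp hlt)
      have h2 := eseq_succ_lt h j
      push_cast
      omega
    · have : i = j + 1 := by omega
      subst this; rfl

lemma exists_K0 (g : ZMod n → ℤ) :
    ∃ K0 : ℕ, ∀ K : ℕ, K0 ≤ K →
      (∀ r : ZMod n, 0 ≤ g r / n + K) ∧ (∀ r : ZMod n, -1 - (K:ℤ)*n ≤ g r) := by
  classical
  have hnpos : 0 < n := npos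
  set f : ZMod n → ℕ := fun r => max ((-(g r / n)).toNat) ((-1 - g r).toNat) with hf
  have hne : (Finset.univ.image f).Nonempty := by simp [Finset.univ_nonempty]
  refine ⟨(Finset.univ.image f).max' hne, fun K hK => ⟨fun r => ?_, fun r => ?_⟩⟩
  · have h1 : f r ≤ K := le_trans (Finset.le_max' _ _ (Finset.mem_image_of_mem f (Finset.mem_univ r))) hK
    have h2 : (-(g r / n)).toNat ≤ K := le_trans (le_max_left _ _) h1
    have h3 : -(g r / n) ≤ ((-(g r / n)).toNat : ℤ) := Int.self_le_toNat _
    have h4 : (((-(g r / n)).toNat : ℕ) : ℤ) ≤ K := by exact_mod_cast h2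
    omega
  · have h1 : f r ≤ K := le_trans (Finset.le_max' _ _ (Finset.mem_image_of_mem f (Finset.mem_univ r))) hK
    have h2 : (-1 - g r).toNat ≤ K := le_trans (le_max_right _ _) h1
    have h3 : -1 - g r ≤ ((-1 - g r).toNat : ℤ) := Int.self_le_toNat _
    have h4 : (((-1 - g r).toNat : ℕ) : ℤ) ≤ K := by exact_mod_cast h2
    have h5 : (1:ℤ) ≤ n := by exact_mod_cast hnpos
    have h6 : (0:ℤ) ≤ K := by positivity
    nlinarith

lemma neg_mem_Sg {g : ZMod n → ℤ} (K : ℕ) (hK2 : ∀ r : ZMod n, -1 - (K:ℤ)*n ≤ g r) :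
    -1 - (K:ℤ)*n ∈ Sg n g := hK2 _

lemma count_shift (g : ZMod n → ℤ) (K : ℕ) :
    {y ∈ Sg n g | -1 - (K:ℤ)*n < y} = {y ∈ Sg n g | -((K:ℤ)*n) ≤ y} := by
  ext y
  simp only [Set.mem_setOf_eq]
  constructor
  · rintro ⟨h1, h2⟩; exact ⟨h1, by omega⟩
  · rintro ⟨h1, h2⟩; exact ⟨h1, by omega⟩

lemma eseq_Sg_eventual {g : ZMod n → ℤ} (hg : Cong n g) (hch : charge n g = -n) (K : ℕ)
    (hK : ∀ r : ZMod n, 0 ≤ g r / n + K) (hK2 : ∀ r : ZMod n, -1 - (K:ℤ)*n ≤ g r) :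
    eseq (Sg n g) (K*n) = -1 - (K:ℤ)*n := by
  apply eseq_of_count (goodS_Sg g) (neg_mem_Sg K hK2)
  rw [count_shift g K]
  have := count_Sg g hg K hK
  rw [hch] at this
  have h2 : ({y ∈ Sg n g | -((K:ℤ)*n) ≤ y}.ncard : ℤ) = ((K*n : ℕ) : ℤ) := by push_cast; omega
  exact_mod_cast h2

/-- The partition built from a class-max function with charge `-n`. -/
noncomputable def pg (g : ZMod n → ℤ) (hg : Cong n g) (hch : charge n g = -n) : YPartition where
  parts := fun i => (eseq (Sg n g) i + 1 + i).toNat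
  antitone := by
    intro i j hij
    have := eseq_anti' (goodS_Sg g) hij
    have h2 : eseq (Sg n g) j + 1 + j ≤ eseq (Sg n g) i + 1 + i := by omega
    omega
  support_finite := by
    obtain ⟨K0, hK0⟩ := exists_K0 (n := n) g
    obtain ⟨hKa, hKb⟩ := hK0 K0 le_rfl
    refine ⟨K0 * n, fun i hi => ?_⟩
    have h1 := eseq_anti' (goodS_Sg g) hi
    have h2 := eseq_Sg_eventual hg hch K0 hKa hKb
    rw [h2] at h1
    have h3 : ((K0 * n : ℕ) : ℤ) = (K0:ℤ)*n := by push_cast; ring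
    rw [h3] at h1
    omega

lemma pg_parts_cast {g : ZMod n → ℤ} (hg : Cong n g) (hch : charge n g = -n) (i : ℕ) :
    (((pg g hg hch).parts i : ℕ) : ℤ) = eseq (Sg n g) i + 1 + i := by
  show ((( eseq (Sg n g) i + 1 + i).toNat : ℕ) : ℤ) = _
  rw [Int.toNat_of_nonneg]
  obtain ⟨K0, hK0⟩ := exists_K0 (n := n) g
  obtain ⟨hKa, hKb⟩ := hK0 (K0 + i) (Nat.le_add_right _ _)
  have h2 := eseq_Sg_eventual hg hch (K0+i) hKa hKb
  have hle : i ≤ (K0 + i) * n := by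
    have h0 := npos (n := n)
    have := Nat.le_mul_of_pos_right (K0 + i) h0
    omega
  have h1 := eseq_anti' (goodS_Sg g) hle
  rw [h2] at h1
  have h3 : (((K0+i) * n : ℕ) : ℤ) = ((K0:ℤ)+i)*n := by push_cast; ring
  rw [h3] at h1
  omega

lemma SS_pg {g : ZMod n → ℤ} (hg : Cong n g) (hch : charge n g = -n) :
    SS (pg g hg hch) = Sg n g := by
  ext x
  constructor
  · rintro ⟨i, rfl⟩
    have h1 := pg_parts_cast hg hch i
    have h2 : (((pg g hg hch).parts i : ℕ) : ℤ) - 1 - i = eseq (Sg n g) i := by omega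
    rw [h2]
    exact eseq_mem (goodS_Sg g) i
  · intro hx
    obtain ⟨i, hi⟩ := eseq_surj (goodS_Sg g) hx
    refine ⟨i, ?_⟩
    have h1 := pg_parts_cast hg hch i
    omega

lemma charge_gp (p : YPartition) (hcl : ∀ x ∈ SS p, x - n ∈ SS p) :
    charge n (gp n p) = -n := by
  have hg := cong_gp (n := n) p
  have hSS := SS_eq_Sg_gp (n := n) p hcl
  obtain ⟨N, hN⟩ := p.support_finite
  obtain ⟨K0, hK0⟩ := exists_K0 (n := n) (gp n p)
  obtain ⟨hKa, hKb⟩ := hK0 (K0 + N) (Nat.le_add_right _ _)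
  set K := K0 + N with hKdef
  have hnpos : 0 < n := npos
  have hKnN : N ≤ K * n := by
    have := Nat.le_mul_of_pos_right K hnpos
    omega
  have he : eseq (SS p) (K*n) = -1 - (K:ℤ)*n := by
    rw [eseq_SS p (K*n), hN _ hKnN]
    push_cast
    ring
  have hcount := eseq_count (goodS_SS p) (K*n)
  rw [he, hSS] at hcount
  rw [count_shift (n := n) (gp n p) K] at hcount
  have h2 := count_Sg (gp n p) hg K hKa
  rw [hcount] at h2
  push_cast at h2
  omega

lemma YPartition_ext {p q : YPartition} (h : ∀ i, p.parts i = q.parts i) : p = q := by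
  cases p; cases q
  simp only [YPartition.mk.injEq]
  funext i
  exact h i

lemma pg_gp (p : YPartition) (hcl : ∀ x ∈ SS p, x - n ∈ SS p) :
    pg (gp n p) (cong_gp p) (charge_gp p hcl) = p := by
  apply YPartition_ext
  intro i
  have h1 := pg_parts_cast (cong_gp (n := n) p) (charge_gp p hcl) i
  rw [← SS_eq_Sg_gp (n := n) p hcl] at h1
  rw [eseq_SS p i] at h1
  omega

lemma gp_pg {g : ZMod n → ℤ} (hg : Cong n g) (hch : charge n g = -n) :
    gp n (pg g hg hch) = g := by
  funext r
  have hSS := SS_pg hg hch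
  have hm := gp_mem (n := n) (pg g hg hch) r
  apply le_antisymm
  · have h1 : gp n (pg g hg hch) r ∈ Sg n g := hSS ▸ hm.1
    have h2 : gp n (pg g hg hch) r ≤ g (((gp n (pg g hg hch) r : ℤ) : ZMod n)) := h1
    rwa [hm.2.1] at h2
  · exact hm.2.2 (g r) (hSS ▸ g_mem_Sg hg r) (hg r)

end Anderson
end Part6b
section Part6c
namespace Anderson
open YPartition

variable {s t : ℕ}

/-- step condition for class-max functions -/
def C2 (s t : ℕ) (g : ZMod (s+t) → ℤ) : Prop :=
  ∀ r : ZMod (s+t), g (r + s) - g r = s ∨ g (r + s) - g r = -t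

lemma hst0 (s t : ℕ) : ((s : ZMod (s+t)) + (t : ZMod (s+t))) = 0 := by
  rw [← Nat.cast_add]; exact ZMod.natCast_self _

section
variable (hs : 0 < s) (ht : 0 < t) [NeZero (s+t)]

include hs ht in
lemma C2_of_closure (p : YPartition)
    (hcls : ∀ x ∈ SS p, x - s ∈ SS p) (hclt : ∀ x ∈ SS p, x - t ∈ SS p) :
    C2 s t (gp (s+t) p) := by
  intro r
  have hg : Cong (s+t) (gp (s+t) p) := cong_gp p
  have hcast1 : ((gp (s+t) p r - t : ℤ) : ZMod (s+t)) = r + (s:ZMod (s+t)) := by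
    push_cast
    rw [hg r]
    linear_combination -(hst0 s t)
  have h1 : gp (s+t) p r - t ≤ gp (s+t) p (r + (s:ZMod (s+t))) :=
    (gp_mem p (r + (s:ZMod (s+t)))).2.2 _ (hclt _ (gp_mem p r).1) hcast1
  have hcast2 : ((gp (s+t) p (r + (s:ZMod (s+t))) - s : ℤ) : ZMod (s+t)) = r := by
    push_cast
    rw [hg (r + (s:ZMod (s+t)))]
    ring
  have h2 : gp (s+t) p (r + (s:ZMod (s+t))) - s ≤ gp (s+t) p r :=
    (gp_mem p r).2.2 _ (hcls _ (gp_mem p (r + (s:ZMod (s+t)))).1) hcast2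
  have h3 : (s:ℤ) + t ∣ (gp (s+t) p (r + (s:ZMod (s+t))) - gp (s+t) p r) - s := by
    have hc : (((gp (s+t) p (r + (s:ZMod (s+t))) - gp (s+t) p r - s : ℤ)) : ZMod (s+t)) = 0 := by
      push_cast
      rw [hg r, hg (r + (s:ZMod (s+t)))]
      ring
    have := (ZMod.intCast_zmod_eq_zero_iff_dvd _ (s+t)).mp hc
    exact_mod_cast this
  obtain ⟨c, hc⟩ := h3
  have hsz : (0:ℤ) < s := by exact_mod_cast hs
  have htz : (0:ℤ) < t := by exact_mod_cast ht
  rcases lt_trichotomy c (-1) with hlt | heq | hgt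
  · exfalso; nlinarith
  · right; rw [heq] at hc; omega
  · have : 0 ≤ c := by omega
    rcases eq_or_lt_of_le this with heq0 | hpos
    · left; rw [← heq0] at hc; omega
    · exfalso; nlinarith

lemma closure_of_C2 {g : ZMod (s+t) → ℤ} (hg : Cong (s+t) g) (h2 : C2 s t g) :
    (∀ x ∈ Sg (s+t) g, x - s ∈ Sg (s+t) g) ∧ (∀ x ∈ Sg (s+t) g, x - t ∈ Sg (s+t) g) := by
  constructor
  · intro x hx
    have hx' : x ≤ g ((x : ZMod (s+t))) := hx
    show x - s ≤ g (((x - s : ℤ) : ZMod (s+t)))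
    have hcast : ((x - s : ℤ) : ZMod (s+t)) = (x : ZMod (s+t)) - s := by push_cast; ring
    rw [hcast]
    have h3 := h2 ((x : ZMod (s+t)) - s)
    rw [sub_add_cancel] at h3
    omega
  · intro x hx
    have hx' : x ≤ g ((x : ZMod (s+t))) := hx
    show x - t ≤ g (((x - t : ℤ) : ZMod (s+t)))
    have hcast : ((x - t : ℤ) : ZMod (s+t)) = (x : ZMod (s+t)) + s := by
      push_cast
      linear_combination -(hst0 s t)
    rw [hcast]
    have h3 := h2 ((x : ZMod (s+t)))
    omega

include hs ht in
lemma core_iff_closure (p : YPartition) :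
    (p.IsCore s ∧ p.IsCore t) ↔
      ((∀ x ∈ SS p, x - s ∈ SS p) ∧ (∀ x ∈ SS p, x - t ∈ SS p)) := by
  rw [isCore_iff p s hs, isCore_iff p t ht]

include hs ht in
lemma closure_n (p : YPartition)
    (hcls : ∀ x ∈ SS p, x - s ∈ SS p) (hclt : ∀ x ∈ SS p, x - t ∈ SS p) :
    ∀ x ∈ SS p, x - (s+t : ℕ) ∈ SS p := by
  intro x hx
  have h1 := hclt _ (hcls _ hx)
  have : x - (s:ℤ) - t = x - ((s+t : ℕ) : ℤ) := by push_cast; ring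
  rwa [this] at h1

/-- E1: cores correspond to class-max functions. -/
noncomputable def E1 (hs : 0 < s) (ht : 0 < t) [NeZero (s+t)] :
    {p : YPartition // p.IsCore s ∧ p.IsCore t} ≃
      {g : ZMod (s+t) → ℤ // Cong (s+t) g ∧ C2 s t g ∧ charge (s+t) g = -(s+t:ℕ)} where
  toFun p := ⟨gp (s+t) p.val, cong_gp p.val,
    C2_of_closure hs ht p.val ((core_iff_closure hs ht p.val).mp p.prop).1
      ((core_iff_closure hs ht p.val).mp p.prop).2,
    charge_gp p.val (closure_n hs ht p.val ((core_iff_closure hs ht p.val).mp p.prop).1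
      ((core_iff_closure hs ht p.val).mp p.prop).2)⟩
  invFun g := ⟨pg g.val g.prop.1 g.prop.2.2, by
    apply (core_iff_closure hs ht _).mpr
    rw [SS_pg g.prop.1 g.prop.2.2]
    exact closure_of_C2 g.prop.1 g.prop.2.1⟩
  left_inv p := by
    apply Subtype.ext
    exact pg_gp p.val (closure_n hs ht p.val ((core_iff_closure hs ht p.val).mp p.prop).1
      ((core_iff_closure hs ht p.val).mp p.prop).2)
  right_inv g := by
    apply Subtype.ext
    exact gp_pg g.prop.1 g.prop.2.2

end
end Anderson
end Part6c
section Part7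
namespace Anderson

lemma sum_range_zmod {n : ℕ} [NeZero n] (f : ZMod n → ℤ) :
    ∑ j ∈ Finset.range n, f (j : ZMod n) = ∑ r : ZMod n, f r := by
  apply Finset.sum_nbij' (fun j => ((j:ℕ) : ZMod n)) (fun r => r.val)
  · intro a _; exact Finset.mem_univ _
  · intro r _
    exact Finset.mem_range.mpr (ZMod.val_lt r)
  · intro a ha
    exact ZMod.val_natCast_of_lt (Finset.mem_range.mp ha)
  · intro r _
    exact ZMod.natCast_rightInverse r
  · intro a _; rfl

lemma telescope_sum (F : ℕ → ℤ) (m : ℕ) :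
    ∑ j ∈ Finset.range m, (j:ℤ) * (F (j+1) - F j)
      = m * F m - ∑ j ∈ Finset.range m, F (j+1) := by
  induction m with
  | zero => simp
  | succ m ih =>
    rw [Finset.sum_range_succ, ih, Finset.sum_range_succ]
    push_cast
    ring

lemma double_sum (d : ℕ → ℤ) (m : ℕ) :
    ∑ j ∈ Finset.range m, ∑ i ∈ Finset.range j, d i
      = ∑ i ∈ Finset.range m, ((m:ℤ) - 1 - i) * d i := by
  induction m with
  | zero => simp
  | succ m ih =>
    rw [Finset.sum_range_succ, ih, ← Finset.sum_add_distrib, Finset.sum_range_succ]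
    push_cast
    have h0 : ((m:ℤ) + 1 - 1 - m) * d m = 0 := by ring
    rw [h0, add_zero]
    apply Finset.sum_congr rfl
    intro i _
    ring

variable {s t : ℕ}

def delta (s t : ℕ) (w : ZMod (s+t) → Bool) : ZMod (s+t) → ℤ :=
  fun j => if w j then (s:ℤ) else -(t:ℤ)

def cnt (s t : ℕ) [NeZero (s+t)] (w : ZMod (s+t) → Bool) : ℕ :=
  (Finset.univ.filter (fun j => w j = true)).card

def Tw (s t : ℕ) [NeZero (s+t)] (w : ZMod (s+t) → Bool) : ℤ :=
  ∑ j ∈ Finset.range (s+t), (j:ℤ) * delta s t w ((j:ℕ) : ZMod (s+t))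

def tgt (s t : ℕ) : ℕ := (s+t)*(s+t-1)/2

section
variable [NeZero (s+t)]

lemma sum_delta (w : ZMod (s+t) → Bool) :
    ∃ m : ℕ, cnt s t w + m = s + t ∧
      ∑ r : ZMod (s+t), delta s t w r = (cnt s t w : ℤ) * s - (m:ℤ) * t := by
  classical
  refine ⟨(Finset.univ.filter (fun j => ¬ w j = true)).card, ?_, ?_⟩
  · rw [cnt, Finset.card_filter_add_card_filter_not]
    simp [Finset.card_univ, ZMod.card]
  · simp only [delta]
    rw [Finset.sum_ite]
    simp only [Finset.sum_const, nsmul_eq_mul]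
    rw [cnt]
    push_cast
    ring
end
end Anderson
end Part7
section Part7b
namespace Anderson

variable {s t : ℕ}

/-- the unit `s` of `ZMod (s+t)` -/
def uu (s t : ℕ) (hst : Nat.Coprime s t) : (ZMod (s+t))ˣ :=
  ZMod.unitOfCoprime s (by rw [Nat.add_comm]; exact Nat.coprime_add_self_right.mpr hst)

lemma uu_coe (hst : Nat.Coprime s t) : ((uu s t hst : (ZMod (s+t))ˣ) : ZMod (s+t)) = (s : ZMod (s+t)) :=
  ZMod.coe_unitOfCoprime s _

/-- word attached to a class-max function -/
def wg (s t : ℕ) (g : ZMod (s+t) → ℤ) : ZMod (s+t) → Bool :=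
  fun k => decide (g (k * (s : ZMod (s+t)) + (s : ZMod (s+t))) - g (k * (s : ZMod (s+t))) = (s:ℤ))

def Fg (s t : ℕ) (g : ZMod (s+t) → ℤ) : ℕ → ℤ :=
  fun k => g (((k:ℕ) : ZMod (s+t)) * (s : ZMod (s+t)))

section
variable [NeZero (s+t)] (hs : 0 < s) (ht : 0 < t)

include hs ht in
lemma delta_wg {g : ZMod (s+t) → ℤ} (h2 : C2 s t g) (k : ZMod (s+t)) :
    delta s t (wg s t g) k = g (k * (s:ZMod (s+t)) + (s:ZMod (s+t))) - g (k * (s:ZMod (s+t))) := by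
  rcases h2 (k * (s:ZMod (s+t))) with h | h
  · simp [delta, wg, h]
  · have hne' : ¬ ((-(t:ℤ)) = (s:ℤ)) := by
      have h1 : (0:ℤ) < s := by exact_mod_cast hs
      have h1t : (0:ℤ) < t := by exact_mod_cast ht
      omega
    simp [delta, wg, h, hne']

lemma sum_delta_zero {g : ZMod (s+t) → ℤ} (h2 : C2 s t g)
    (hdel : ∀ k : ZMod (s+t), delta s t (wg s t g) k
      = g (k * (s:ZMod (s+t)) + (s:ZMod (s+t))) - g (k * (s:ZMod (s+t)))) :
    ∑ r : ZMod (s+t), delta s t (wg s t g) r = 0 := by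
  rw [Finset.sum_congr rfl (fun r _ => hdel r)]
  rw [Finset.sum_sub_distrib]
  have hb : ∑ r : ZMod (s+t), g (r * (s:ZMod (s+t)) + (s:ZMod (s+t)))
      = ∑ r : ZMod (s+t), g (r * (s:ZMod (s+t))) := by
    apply Fintype.sum_bijective (fun r : ZMod (s+t) => r + 1) (Equiv.addRight 1).bijective
    intro x
    congr 1
    ring
  rw [hb, sub_self]

include hs ht in
lemma cnt_wg {g : ZMod (s+t) → ℤ} (h2 : C2 s t g) : cnt s t (wg s t g) = t := by
  obtain ⟨m, hm, hsum⟩ := sum_delta (wg s t g)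
  rw [sum_delta_zero h2 (delta_wg hs ht h2)] at hsum
  -- 0 = cnt * s - m * t with cnt + m = s + t
  have hz : (cnt s t (wg s t g) : ℤ) * s = (m:ℤ) * t := by omega
  have hmz : (m : ℤ) = (s:ℤ) + t - cnt s t (wg s t g) := by
    have : ((cnt s t (wg s t g) + m : ℕ) : ℤ) = ((s+t:ℕ):ℤ) := by rw [hm]
    push_cast at this
    omega
  rw [hmz] at hz
  have hn0 : ((s:ℤ) + t) ≠ 0 := by
    have h1 : (0:ℤ) < s := by exact_mod_cast hs
    have h1t : (0:ℤ) < t := by exact_mod_cast ht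
    omega
  have : (cnt s t (wg s t g) : ℤ) * ((s:ℤ)+t) = (t:ℤ) * ((s:ℤ)+t) := by ring_nf; ring_nf at hz; omega
  have := mul_right_cancel₀ hn0 this
  exact_mod_cast this

lemma Fg_succ (g : ZMod (s+t) → ℤ) (j : ℕ) :
    Fg s t g (j+1) = g (((j:ℕ) : ZMod (s+t)) * (s:ZMod (s+t)) + (s:ZMod (s+t))) := by
  rw [Fg]
  congr 1
  push_cast
  ring

include hs ht in
lemma T_wg {g : ZMod (s+t) → ℤ} (hst : Nat.Coprime s t) (h2 : C2 s t g) :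
    Tw s t (wg s t g) = ((s+t:ℕ):ℤ) * g 0 - ∑ r : ZMod (s+t), g r := by
  have hdel := delta_wg hs ht h2
  have hstep : ∀ j : ℕ, delta s t (wg s t g) ((j:ℕ) : ZMod (s+t))
      = Fg s t g (j+1) - Fg s t g j := by
    intro j
    rw [hdel, Fg_succ, Fg]
  have hT : Tw s t (wg s t g)
      = ∑ j ∈ Finset.range (s+t), (j:ℤ) * (Fg s t g (j+1) - Fg s t g j) := by
    rw [Tw]
    exact Finset.sum_congr rfl (fun j _ => by rw [hstep j])
  rw [hT, telescope_sum]
  have hFn : Fg s t g (s+t) = g 0 := by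
    rw [Fg]
    congr 1
    simp [ZMod.natCast_self]
  have hshift : ∑ j ∈ Finset.range (s+t), Fg s t g (j+1) = ∑ j ∈ Finset.range (s+t), Fg s t g j := by
    have h1 := Finset.sum_range_succ' (Fg s t g) (s+t)
    have h2' := Finset.sum_range_succ (Fg s t g) (s+t)
    rw [h2'] at h1
    have hF0 : Fg s t g 0 = g 0 := by
      rw [Fg]; congr 1; simp
    rw [hFn, hF0] at h1
    omega
  rw [hshift, hFn]
  have hlast : ∑ j ∈ Finset.range (s+t), Fg s t g j = ∑ r : ZMod (s+t), g r := by
    rw [show ∑ j ∈ Finset.range (s+t), Fg s t g j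
        = ∑ j ∈ Finset.range (s+t), (fun r : ZMod (s+t) => g (r * (s:ZMod (s+t)))) ((j:ℕ) : ZMod (s+t))
      from rfl]
    rw [sum_range_zmod (fun r : ZMod (s+t) => g (r * (s:ZMod (s+t))))]
    exact Fintype.sum_bijective _ (Units.mulRight_bijective (uu s t hst)) _ _
      (fun x => by rw [uu_coe hst])
  rw [hlast]

lemma sum_g_decomp {g : ZMod (s+t) → ℤ} (hg : Cong (s+t) g) :
    ∑ r : ZMod (s+t), g r = ((s+t:ℕ):ℤ) * charge (s+t) g + (tgt s t : ℤ) := by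
  have hmod : ∀ r : ZMod (s+t), g r % ((s+t:ℕ):ℤ) = (r.val : ℤ) := by
    intro r
    have := ZMod.val_intCast (n := s+t) (g r)
    rw [hg r] at this
    omega
  have hsum : ∀ r : ZMod (s+t), g r = ((s+t:ℕ):ℤ) * (g r / ((s+t:ℕ):ℤ)) + (r.val:ℤ) := by
    intro r
    have := Int.mul_ediv_add_emod (g r) ((s+t:ℕ):ℤ)
    rw [hmod r] at this
    omega
  rw [Finset.sum_congr rfl (fun r _ => hsum r), Finset.sum_add_distrib, ← Finset.mul_sum]
  have hval : ∑ r : ZMod (s+t), (r.val : ℤ) = (tgt s t : ℤ) := by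
    rw [← sum_range_zmod (fun r : ZMod (s+t) => (r.val : ℤ))]
    have : ∀ j ∈ Finset.range (s+t), ((((j:ℕ) : ZMod (s+t)).val : ℕ) : ℤ) = (j:ℤ) := by
      intro j hj
      rw [ZMod.val_natCast_of_lt (Finset.mem_range.mp hj)]
    rw [Finset.sum_congr rfl this]
    rw [tgt, ← Finset.sum_range_id]
    push_cast
    rfl
  rw [hval, charge]

include hs ht in
lemma Tcond_wg {g : ZMod (s+t) → ℤ} (hst : Nat.Coprime s t) (hg : Cong (s+t) g) (h2 : C2 s t g)
    (hch : charge (s+t) g = -(s+t:ℕ)) :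
    ((s+t:ℕ):ℤ)^2 ∣ Tw s t (wg s t g) + tgt s t := by
  have hT := T_wg hs ht hst h2
  have hD := sum_g_decomp hg
  rw [hch] at hD
  obtain ⟨c, hc⟩ : ((s+t:ℕ):ℤ) ∣ g 0 := by
    have := hg 0
    have h0 : ((g 0 : ℤ) : ZMod (s+t)) = 0 := by rw [this]
    exact (ZMod.intCast_zmod_eq_zero_iff_dvd _ _).mp h0
  refine ⟨c + 1, ?_⟩
  rw [hT, hD, hc]
  push_cast
  ring

end
end Anderson
end Part7b
section Part7c
namespace Anderson

variable {s t : ℕ}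

def Aw (s t : ℕ) [NeZero (s+t)] (w : ZMod (s+t) → Bool) : ℤ :=
  (Tw s t w + tgt s t) / ((s+t:ℕ):ℤ)

def Fw (s t : ℕ) [NeZero (s+t)] (w : ZMod (s+t) → Bool) : ℕ → ℤ
  | 0 => Aw s t w - ((s+t:ℕ):ℤ)
  | (k+1) => Fw s t w k + delta s t w ((k:ℕ) : ZMod (s+t))

def gw (hst : Nat.Coprime s t) [NeZero (s+t)] (w : ZMod (s+t) → Bool) : ZMod (s+t) → ℤ :=
  fun r => Fw s t w ((r * ((((uu s t hst)⁻¹ : (ZMod (s+t))ˣ)) : ZMod (s+t))).val)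

section
variable [NeZero (s+t)]

lemma stpos : 0 < s + t := npos (n := s + t)

lemma stz_pos : (0:ℤ) < ((s+t:ℕ):ℤ) := by exact_mod_cast stpos (s := s) (t := t)

lemma Aw_mul {w : ZMod (s+t) → Bool} (hw2 : ((s+t:ℕ):ℤ)^2 ∣ Tw s t w + tgt s t) :
    (∃ c, Aw s t w = ((s+t:ℕ):ℤ) * c) ∧ ((s+t:ℕ):ℤ) * Aw s t w = Tw s t w + tgt s t := by
  obtain ⟨c, hc⟩ := hw2
  have hnz : ((s+t:ℕ):ℤ) ≠ 0 := by have := stz_pos (s := s) (t := t); omega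
  have h1 : Tw s t w + tgt s t = ((s+t:ℕ):ℤ) * (((s+t:ℕ):ℤ) * c) := by rw [hc]; ring
  have h2 : Aw s t w = ((s+t:ℕ):ℤ) * c := by
    rw [Aw, h1, Int.mul_ediv_cancel_left _ hnz]
  exact ⟨⟨c, h2⟩, by rw [h2, h1]⟩

lemma delta_cast (w : ZMod (s+t) → Bool) (j : ZMod (s+t)) :
    ((delta s t w j : ℤ) : ZMod (s+t)) = (s : ZMod (s+t)) := by
  rw [delta]
  split
  · push_cast; rfl
  · push_cast
    linear_combination -(hst0 s t)

lemma Fw_cast {w : ZMod (s+t) → Bool} (hw2 : ((s+t:ℕ):ℤ)^2 ∣ Tw s t w + tgt s t) (k : ℕ) :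
    ((Fw s t w k : ℤ) : ZMod (s+t)) = ((k:ℕ) : ZMod (s+t)) * (s : ZMod (s+t)) := by
  induction k with
  | zero =>
    obtain ⟨⟨c, hc⟩, _⟩ := Aw_mul hw2
    show ((Aw s t w - ((s+t:ℕ):ℤ) : ℤ) : ZMod (s+t)) = _
    rw [hc]
    push_cast
    linear_combination ((c : ZMod (s+t)) - 1) * hst0 s t
  | succ k ih =>
    show ((Fw s t w k + delta s t w ((k:ℕ) : ZMod (s+t)) : ℤ) : ZMod (s+t)) = _
    push_cast
    rw [ih]
    rw [delta_cast]
    push_cast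
    ring

lemma sum_delta_zero' {w : ZMod (s+t) → Bool} (hw1 : cnt s t w = t) :
    ∑ r : ZMod (s+t), delta s t w r = 0 := by
  obtain ⟨m, hm, hsum⟩ := sum_delta w
  have hms : m = s := by omega
  rw [hsum, hw1, hms]
  ring

lemma Fw_sum (w : ZMod (s+t) → Bool) (k : ℕ) :
    Fw s t w k = Fw s t w 0 + ∑ j ∈ Finset.range k, delta s t w ((j:ℕ) : ZMod (s+t)) := by
  induction k with
  | zero => simp
  | succ k ih =>
    show Fw s t w k + _ = _
    rw [ih, Finset.sum_range_succ]
    ring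

lemma Fw_period {w : ZMod (s+t) → Bool} (hw1 : cnt s t w = t) :
    Fw s t w (s+t) = Fw s t w 0 := by
  rw [Fw_sum w (s+t)]
  rw [sum_range_zmod (fun r : ZMod (s+t) => delta s t w r)]
  rw [sum_delta_zero' hw1]
  ring

lemma val_succ (x : ZMod (s+t)) :
    ((x + 1).val = x.val + 1 ∧ x.val + 1 < s+t) ∨ ((x+1).val = 0 ∧ x.val = s+t-1) := by
  have hx : (((x.val : ℕ)) : ZMod (s+t)) = x := ZMod.natCast_rightInverse x
  have hvlt : x.val < s + t := ZMod.val_lt x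
  rcases lt_or_ge (x.val + 1) (s+t) with h | h
  · left
    constructor
    · have : x + 1 = (((x.val + 1 : ℕ)) : ZMod (s+t)) := by push_cast; rw [hx]
      rw [this, ZMod.val_natCast_of_lt h]
    · exact h
  · right
    have hv : x.val = s + t - 1 := by omega
    constructor
    · have : x + 1 = (((x.val + 1 : ℕ)) : ZMod (s+t)) := by push_cast; rw [hx]
      rw [this, hv]
      have h2 : s + t - 1 + 1 = s + t := by have := stpos (s := s) (t := t); omega
      rw [h2]
      simp [ZMod.natCast_self]
    · exact hv

lemma gw_cong (hst : Nat.Coprime s t) {w : ZMod (s+t) → Bool}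
    (hw2 : ((s+t:ℕ):ℤ)^2 ∣ Tw s t w + tgt s t) : Cong (s+t) (gw hst w) := by
  intro r
  rw [gw, Fw_cast hw2]
  rw [ZMod.natCast_rightInverse _]
  rw [← uu_coe hst, mul_assoc, Units.inv_mul, mul_one]

lemma gw_mul (hst : Nat.Coprime s t) (w : ZMod (s+t) → Bool) (k : ZMod (s+t)) :
    gw hst w (k * (s : ZMod (s+t))) = Fw s t w (k.val) := by
  rw [gw]
  congr 2
  rw [← uu_coe hst, mul_assoc, Units.mul_inv, mul_one]

lemma Fw_succ_eq (w : ZMod (s+t) → Bool) (k : ℕ) :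
    Fw s t w (k+1) = Fw s t w k + delta s t w ((k:ℕ) : ZMod (s+t)) := rfl

lemma gw_C2 (hst : Nat.Coprime s t) {w : ZMod (s+t) → Bool} (hw1 : cnt s t w = t) :
    C2 s t (gw hst w) := by
  intro r
  have hidx : (r + (s : ZMod (s+t))) * (((uu s t hst)⁻¹ : (ZMod (s+t))ˣ) : ZMod (s+t))
      = r * (((uu s t hst)⁻¹ : (ZMod (s+t))ˣ) : ZMod (s+t)) + 1 := by
    rw [add_mul, ← uu_coe hst, Units.mul_inv]
  set x := r * (((uu s t hst)⁻¹ : (ZMod (s+t))ˣ) : ZMod (s+t)) with hxdef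
  have hgr : gw hst w r = Fw s t w x.val := rfl
  have hgrs : gw hst w (r + (s : ZMod (s+t))) = Fw s t w ((x+1).val) := by
    rw [gw, hidx]
  have hdel : ∀ j : ZMod (s+t), delta s t w j = (s:ℤ) ∨ delta s t w j = -(t:ℤ) := by
    intro j
    rw [delta]
    split
    · left; rfl
    · right; rfl
  rcases val_succ x with ⟨h1, _⟩ | ⟨h1, h2⟩
  · rw [hgr, hgrs, h1, Fw_succ_eq]
    have := hdel ((x.val : ℕ) : ZMod (s+t))
    rcases this with h | h
    · left; rw [h]; ring
    · right; rw [h]; ring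
  · rw [hgr, hgrs, h1, h2]
    have hn1 : s + t = (s + t - 1) + 1 := by have := stpos (s := s) (t := t); omega
    have hper : Fw s t w 0 = Fw s t w (s+t-1) + delta s t w (((s+t-1 : ℕ)) : ZMod (s+t)) := by
      rw [← Fw_succ_eq, ← hn1, Fw_period hw1]
    rcases hdel (((s+t-1 : ℕ)) : ZMod (s+t)) with h | h
    · left; rw [hper, h]; ring
    · right; rw [hper, h]; ring

lemma sum_gw (hst : Nat.Coprime s t) {w : ZMod (s+t) → Bool} (hw1 : cnt s t w = t) :
    ∑ r : ZMod (s+t), gw hst w r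
      = ((s+t:ℕ):ℤ) * Aw s t w - ((s+t:ℕ):ℤ)^2 - Tw s t w := by
  have h1 : ∑ r : ZMod (s+t), gw hst w r = ∑ r : ZMod (s+t), Fw s t w r.val := by
    exact Fintype.sum_bijective _ (Units.mulRight_bijective ((uu s t hst)⁻¹)) _ _
      (fun x => rfl)
  rw [h1]
  have h2 : ∑ r : ZMod (s+t), Fw s t w r.val = ∑ j ∈ Finset.range (s+t), Fw s t w j := by
    rw [← sum_range_zmod (fun r : ZMod (s+t) => Fw s t w r.val)]
    apply Finset.sum_congr rfl
    intro j hj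
    rw [ZMod.val_natCast_of_lt (Finset.mem_range.mp hj)]
  rw [h2]
  have h3 : ∑ j ∈ Finset.range (s+t), Fw s t w j
      = ∑ j ∈ Finset.range (s+t), (Fw s t w 0 + ∑ i ∈ Finset.range j, delta s t w ((i:ℕ) : ZMod (s+t))) :=
    Finset.sum_congr rfl (fun j _ => Fw_sum w j)
  rw [h3, Finset.sum_add_distrib, Finset.sum_const, Finset.card_range, double_sum]
  have h4 : ∑ i ∈ Finset.range (s+t), (((s+t:ℕ):ℤ) - 1 - i) * delta s t w ((i:ℕ) : ZMod (s+t))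
      = (((s+t:ℕ):ℤ) - 1) * (∑ i ∈ Finset.range (s+t), delta s t w ((i:ℕ) : ZMod (s+t)))
        - Tw s t w := by
    rw [Tw, Finset.mul_sum, ← Finset.sum_sub_distrib]
    apply Finset.sum_congr rfl
    intro i _
    ring
  rw [h4]
  rw [sum_range_zmod (fun r : ZMod (s+t) => delta s t w r), sum_delta_zero' hw1]
  show ((s+t:ℕ):ℤ) • (Aw s t w - ((s+t:ℕ):ℤ)) + _ = _
  rw [smul_eq_mul]
  ring

lemma gw_charge (hst : Nat.Coprime s t) {w : ZMod (s+t) → Bool} (hw1 : cnt s t w = t)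
    (hw2 : ((s+t:ℕ):ℤ)^2 ∣ Tw s t w + tgt s t) :
    charge (s+t) (gw hst w) = -((s+t:ℕ):ℤ) := by
  have hd := sum_g_decomp (gw_cong hst hw2)
  have hsg := sum_gw hst hw1
  obtain ⟨_, hA⟩ := Aw_mul hw2
  rw [hsg, hA] at hd
  have hnz : ((s+t:ℕ):ℤ) ≠ 0 := by have := stz_pos (s := s) (t := t); omega
  have : ((s+t:ℕ):ℤ) * charge (s+t) (gw hst w) = ((s+t:ℕ):ℤ) * (-((s+t:ℕ):ℤ)) := by
    have hsq : ((s+t:ℕ):ℤ)^2 = ((s+t:ℕ):ℤ) * ((s+t:ℕ):ℤ) := sq _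
    have hneg : ((s+t:ℕ):ℤ) * (-((s+t:ℕ):ℤ)) = -(((s+t:ℕ):ℤ) * ((s+t:ℕ):ℤ)) := by ring
    omega
  exact mul_left_cancel₀ hnz this

end
end Anderson
end Part7c
section Part7d
namespace Anderson

variable {s t : ℕ}

section
variable [NeZero (s+t)] (hs : 0 < s) (ht : 0 < t)

include hs ht in
lemma Aw_wg (hst : Nat.Coprime s t) {g : ZMod (s+t) → ℤ} (hg : Cong (s+t) g)
    (h2 : C2 s t g) (hch : charge (s+t) g = -((s+t:ℕ):ℤ)) :
    Aw s t (wg s t g) = g 0 + ((s+t:ℕ):ℤ) := by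
  have hT := T_wg hs ht hst h2
  have hD := sum_g_decomp hg
  rw [hch] at hD
  have hnz : ((s+t:ℕ):ℤ) ≠ 0 := by have := stz_pos (s := s) (t := t); omega
  have h1 : Tw s t (wg s t g) + tgt s t = ((s+t:ℕ):ℤ) * (g 0 + ((s+t:ℕ):ℤ)) := by
    rw [hT, hD]; ring
  rw [Aw, h1, Int.mul_ediv_cancel_left _ hnz]

include hs ht in
lemma Fw_wg (hst : Nat.Coprime s t) {g : ZMod (s+t) → ℤ} (hg : Cong (s+t) g)
    (h2 : C2 s t g) (hch : charge (s+t) g = -((s+t:ℕ):ℤ)) (k : ℕ) :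
    Fw s t (wg s t g) k = Fg s t g k := by
  induction k with
  | zero =>
    show Aw s t (wg s t g) - ((s+t:ℕ):ℤ) = Fg s t g 0
    rw [Aw_wg hs ht hst hg h2 hch, Fg]
    simp
  | succ k ih =>
    rw [Fw_succ_eq, ih, delta_wg hs ht h2, Fg_succ, Fg]
    ring

include hs ht in
lemma gw_wg (hst : Nat.Coprime s t) {g : ZMod (s+t) → ℤ} (hg : Cong (s+t) g)
    (h2 : C2 s t g) (hch : charge (s+t) g = -((s+t:ℕ):ℤ)) :
    gw hst (wg s t g) = g := by
  funext r
  rw [gw, Fw_wg hs ht hst hg h2 hch, Fg]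
  rw [ZMod.natCast_rightInverse _]
  rw [← uu_coe hst, mul_assoc, Units.inv_mul, mul_one]

include hs ht in
lemma wg_gw (hst : Nat.Coprime s t) {w : ZMod (s+t) → Bool} (hw1 : cnt s t w = t) :
    wg s t (gw hst w) = w := by
  funext k
  have hcast : (((k.val : ℕ)) : ZMod (s+t)) = k := ZMod.natCast_rightInverse k
  have hdiff : gw hst w (k * (s:ZMod (s+t)) + (s:ZMod (s+t))) - gw hst w (k * (s:ZMod (s+t)))
      = delta s t w k := by
    have hks : k * (s:ZMod (s+t)) + (s:ZMod (s+t)) = (k+1) * (s:ZMod (s+t)) := by ring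
    rw [hks, gw_mul hst, gw_mul hst]
    rcases val_succ k with ⟨h1, _⟩ | ⟨h1, h2⟩
    · rw [h1, Fw_succ_eq, hcast]
      ring
    · rw [h1, h2]
      have hn1 : s + t = (s + t - 1) + 1 := by have := stpos (s := s) (t := t); omega
      have hper : Fw s t w 0 = Fw s t w (s+t-1) + delta s t w (((s+t-1 : ℕ)) : ZMod (s+t)) := by
        rw [← Fw_succ_eq, ← hn1, Fw_period hw1]
      rw [hper]
      rw [show (((s+t-1 : ℕ)) : ZMod (s+t)) = k by rw [← h2, hcast]]
      ring
  show decide (gw hst w (k * (s:ZMod (s+t)) + (s:ZMod (s+t))) - gw hst w (k * (s:ZMod (s+t))) = ((s:ℕ):ℤ)) = w k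
  rw [hdiff]
  have hne : ¬ ((-(t:ℤ)) = ((s:ℕ):ℤ)) := by
    have h1 : (0:ℤ) < s := by exact_mod_cast hs
    have h1t : (0:ℤ) < t := by exact_mod_cast ht
    omega
  cases hwk : w k
  · simp [delta, hwk, hne]
  · simp [delta, hwk]

/-- E2: class-max functions correspond to words. -/
noncomputable def E2 (hs : 0 < s) (ht : 0 < t) (hst : Nat.Coprime s t) [NeZero (s+t)] :
    {g : ZMod (s+t) → ℤ // Cong (s+t) g ∧ C2 s t g ∧ charge (s+t) g = -(s+t:ℕ)} ≃
      {w : ZMod (s+t) → Bool // cnt s t w = t ∧ ((s+t:ℕ):ℤ)^2 ∣ Tw s t w + tgt s t} where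
  toFun g := ⟨wg s t g.val, cnt_wg hs ht g.prop.2.1,
    Tcond_wg hs ht hst g.prop.1 g.prop.2.1 g.prop.2.2⟩
  invFun w := ⟨gw hst w.val, gw_cong hst w.prop.2, gw_C2 hst w.prop.1,
    gw_charge hst w.prop.1 w.prop.2⟩
  left_inv g := Subtype.ext (gw_wg hs ht hst g.prop.1 g.prop.2.1 g.prop.2.2)
  right_inv w := Subtype.ext (wg_gw hs ht hst w.prop.1)

end
end Anderson
end Part7d
section Part8
namespace Anderson

variable {s t : ℕ}

def rotc [NeZero (s+t)] (c : ZMod (s+t)) (w : ZMod (s+t) → Bool) : ZMod (s+t) → Bool :=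
  fun j => w (j + c)

section
variable [NeZero (s+t)]

lemma rotc_rotc (c d : ZMod (s+t)) (w : ZMod (s+t) → Bool) :
    rotc c (rotc d w) = rotc (c + d) w := by
  funext j
  show w (j + c + d) = w (j + (c + d))
  rw [add_assoc]

lemma rotc_zero (w : ZMod (s+t) → Bool) : rotc 0 w = w := by
  funext j
  show w (j + 0) = w j
  rw [add_zero]

lemma cnt_rotc (c : ZMod (s+t)) (w : ZMod (s+t) → Bool) :
    cnt s t (rotc c w) = cnt s t w := by
  classical
  rw [cnt, cnt]
  apply Finset.card_nbij' (fun j => j + c) (fun j => j - c)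
  · intro a ha
    simp only [Finset.mem_coe, Finset.mem_filter, Finset.mem_univ, true_and] at ha ⊢
    exact ha
  · intro a ha
    simp only [Finset.mem_coe, Finset.mem_filter, Finset.mem_univ, true_and] at ha ⊢
    simp only [rotc]
    rw [sub_add_cancel]
    exact ha
  · intro a _; ring
  · intro a _; ring

lemma delta_rotc (c : ZMod (s+t)) (w : ZMod (s+t) → Bool) (j : ZMod (s+t)) :
    delta s t (rotc c w) j = delta s t w (j + c) := rfl

lemma Tw_rot1 {w : ZMod (s+t) → Bool} (hw1 : cnt s t w = t) :
    Tw s t (rotc 1 w) = Tw s t w + ((s+t:ℕ):ℤ) * delta s t w 0 := by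
  set G : ℕ → ℤ := fun j => ((j:ℤ) - 1) * delta s t w ((j:ℕ) : ZMod (s+t)) with hG
  have hTr : Tw s t (rotc 1 w) = ∑ j ∈ Finset.range (s+t), G (j+1) := by
    rw [Tw]
    apply Finset.sum_congr rfl
    intro j _
    rw [delta_rotc, hG]
    push_cast
    ring_nf
  rw [hTr]
  have h1 := Finset.sum_range_succ' G (s+t)
  have h2 := Finset.sum_range_succ G (s+t)
  rw [h2] at h1
  -- h1 : ∑_{range (s+t)} G + G (s+t) = (∑_{range (s+t)} G (j+1)) + G 0
  have hGn : G (s+t) = ((s+t:ℕ):ℤ) * delta s t w 0 - delta s t w 0 := by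
    rw [hG]
    dsimp only
    rw [show (((s+t:ℕ)) : ZMod (s+t)) = 0 from ZMod.natCast_self _]
    ring
  have hG0 : G 0 = - delta s t w 0 := by
    rw [hG]
    push_cast
    ring_nf
  have hsum0 : ∑ j ∈ Finset.range (s+t), delta s t w ((j:ℕ) : ZMod (s+t)) = 0 := by
    rw [sum_range_zmod (fun r : ZMod (s+t) => delta s t w r)]
    exact sum_delta_zero' hw1
  have hGsum : ∑ j ∈ Finset.range (s+t), G j = Tw s t w
      - ∑ j ∈ Finset.range (s+t), delta s t w ((j:ℕ) : ZMod (s+t)) := by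
    rw [Tw, ← Finset.sum_sub_distrib]
    apply Finset.sum_congr rfl
    intro j _
    rw [hG]
    ring
  rw [hGsum, hsum0] at h1
  rw [hGn, hG0] at h1
  omega

lemma rotc_cast_succ (k : ℕ) (w : ZMod (s+t) → Bool) :
    rotc (((k+1 : ℕ)) : ZMod (s+t)) w = rotc 1 (rotc ((k:ℕ) : ZMod (s+t)) w) := by
  rw [rotc_rotc]
  congr 1
  push_cast
  ring

lemma Tw_rot_iter {w : ZMod (s+t) → Bool} (hw1 : cnt s t w = t) (k : ℕ) :
    ∃ c : ℤ, Tw s t (rotc ((k:ℕ) : ZMod (s+t)) w)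
      = Tw s t w + k * ((s+t:ℕ):ℤ) * s + ((s+t:ℕ):ℤ)^2 * c := by
  induction k with
  | zero =>
    refine ⟨0, ?_⟩
    have : (((0:ℕ)) : ZMod (s+t)) = 0 := by push_cast; rfl
    rw [this, rotc_zero]
    push_cast
    ring
  | succ k ih =>
    obtain ⟨c, hc⟩ := ih
    rw [rotc_cast_succ]
    have hcnt' : cnt s t (rotc ((k:ℕ) : ZMod (s+t)) w) = t := by rw [cnt_rotc, hw1]
    rw [Tw_rot1 hcnt']
    rw [hc]
    -- delta value: s or -t, and n*(-t) = n*s - n^2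
    have hdel : ∃ e : ℤ, delta s t (rotc ((k:ℕ) : ZMod (s+t)) w) 0 = (s:ℤ) + ((s+t:ℕ):ℤ) * e := by
      rw [delta]
      split
      · exact ⟨0, by ring⟩
      · refine ⟨-1, ?_⟩
        push_cast
        ring
    obtain ⟨e, he⟩ := hdel
    refine ⟨c + e, ?_⟩
    rw [he]
    push_cast
    ring

lemma two_dvd_nn : 2 ∣ (s+t) * (s+t-1) := by
  rcases Nat.even_or_odd (s+t) with he | ho
  · exact Dvd.dvd.mul_right he.two_dvd _
  · obtain ⟨c, hc⟩ := ho
    exact ⟨(s+t)*c, by rw [show s+t-1 = 2*c from by omega]; ring⟩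

lemma tgt_two : tgt s t * 2 = (s+t) * (s+t-1) := by
  rw [tgt]
  exact Nat.div_mul_cancel two_dvd_nn

lemma n_dvd_s1_tgt (hst : Nat.Coprime s t) : (s+t) ∣ (s+1) * tgt s t := by
  rcases Nat.even_or_odd (s+t) with he | ho
  · -- s and t both odd
    have hso : Odd s := by
      rcases Nat.even_or_odd s with hes | hos
      · exfalso
        have het : Even t := by
          rcases Nat.even_add.mp he with h
          exact h.mp hes
        have h2s : 2 ∣ s := hes.two_dvd
        have h2t : 2 ∣ t := het.two_dvd
        have := Nat.dvd_gcd h2s h2t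
        rw [hst] at this
        omega
      · exact hos
    obtain ⟨a, ha⟩ := hso
    refine ⟨(a+1) * (s+t-1), ?_⟩
    have h2 := tgt_two (s := s) (t := t)
    have : ((s+1) * tgt s t) * 2 = ((s+t) * ((a+1)*(s+t-1))) * 2 := by
      calc ((s+1) * tgt s t) * 2 = (s+1) * (tgt s t * 2) := by ring
      _ = (s+1) * ((s+t) * (s+t-1)) := by rw [h2]
      _ = ((s+t) * ((a+1)*(s+t-1))) * 2 := by rw [ha]; ring
    omega
  · obtain ⟨c, hc⟩ := ho
    refine ⟨(s+1) * c, ?_⟩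
    have h2 := tgt_two (s := s) (t := t)
    have : ((s+1) * tgt s t) * 2 = ((s+t) * ((s+1)*c)) * 2 := by
      calc ((s+1) * tgt s t) * 2 = (s+1) * (tgt s t * 2) := by ring
      _ = (s+1) * ((s+t) * (s+t-1)) := by rw [h2]
      _ = ((s+t) * ((s+1)*c)) * 2 := by rw [hc]; simp; ring
    omega

lemma n_dvd_Tw_tgt (hst : Nat.Coprime s t) {w : ZMod (s+t) → Bool} :
    ((s+t:ℕ):ℤ) ∣ Tw s t w + tgt s t := by
  have h1 : ((s+t:ℕ):ℤ) ∣ Tw s t w - (s:ℤ) * tgt s t := by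
    have hsub : Tw s t w - (s:ℤ) * tgt s t
        = ∑ j ∈ Finset.range (s+t), (j:ℤ) * (delta s t w ((j:ℕ) : ZMod (s+t)) - s) := by
      rw [Tw, Finset.sum_congr rfl
        (fun (j:ℕ) _ => (by ring : (j:ℤ) * (delta s t w ((j:ℕ) : ZMod (s+t)) - s)
          = (j:ℤ) * delta s t w ((j:ℕ) : ZMod (s+t)) - j * s)), Finset.sum_sub_distrib]
      congr 1
      rw [← Finset.sum_mul]
      have : ∑ j ∈ Finset.range (s+t), (j:ℤ) = (tgt s t : ℤ) := by
        have := Finset.sum_range_id (s+t)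
        rw [tgt]
        rw [← this]
        push_cast
        rfl
      rw [this]
      ring
    rw [hsub]
    apply Finset.dvd_sum
    intro j _
    apply Dvd.dvd.mul_left
    rw [delta]
    split
    · simp
    · refine ⟨-1, ?_⟩
      push_cast
      ring
  have h2 : ((s+t:ℕ):ℤ) ∣ ((s:ℤ)+1) * tgt s t := by
    obtain ⟨c, hc⟩ := n_dvd_s1_tgt hst
    refine ⟨(c:ℤ), ?_⟩
    have h3 : (((s+1) * tgt s t : ℕ) : ℤ) = (((s+t)*c : ℕ) : ℤ) := by rw [hc]
    push_cast at h3 ⊢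
    omega
  have : Tw s t w + tgt s t = (Tw s t w - (s:ℤ) * tgt s t) + ((s:ℤ)+1) * tgt s t := by ring
  rw [this]
  exact dvd_add h1 h2

end
end Anderson
end Part8
section Part8b
namespace Anderson

variable {s t : ℕ}

def dd (hst : Nat.Coprime s t) [NeZero (s+t)] (w : ZMod (s+t) → Bool) : ZMod (s+t) :=
  ((-(Aw s t w) : ℤ) : ZMod (s+t)) * (((uu s t hst)⁻¹ : (ZMod (s+t))ˣ) : ZMod (s+t))

section
variable [NeZero (s+t)]

lemma nAw (hst : Nat.Coprime s t) (w : ZMod (s+t) → Bool) :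
    ((s+t:ℕ):ℤ) * Aw s t w = Tw s t w + tgt s t :=
  Int.mul_ediv_cancel' (n_dvd_Tw_tgt hst)

lemma rotc_val (c : ZMod (s+t)) (w : ZMod (s+t) → Bool) :
    rotc c w = rotc (((c.val : ℕ)) : ZMod (s+t)) w := by
  rw [ZMod.natCast_rightInverse c]

lemma KL1 (hst : Nat.Coprime s t) {w : ZMod (s+t) → Bool} (hw1 : cnt s t w = t) :
    ((s+t:ℕ):ℤ)^2 ∣ Tw s t (rotc (dd hst w) w) + tgt s t := by
  set k := (dd hst w).val with hk
  rw [rotc_val]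
  obtain ⟨c, hc⟩ := Tw_rot_iter hw1 k
  have hdvd : ((s+t:ℕ):ℤ) ∣ Aw s t w + (k:ℤ) * s := by
    apply (ZMod.intCast_zmod_eq_zero_iff_dvd _ _).mp
    push_cast
    rw [show (((k:ℕ)) : ZMod (s+t)) = dd hst w from ZMod.natCast_rightInverse _]
    rw [show ((s:ℕ) : ZMod (s+t)) = ((uu s t hst : (ZMod (s+t))ˣ) : ZMod (s+t)) from (uu_coe hst).symm]
    rw [dd]
    push_cast
    rw [mul_assoc, Units.inv_mul, mul_one]
    ring
  obtain ⟨e, he⟩ := hdvd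
  have hA := nAw hst w
  refine ⟨e + c, ?_⟩
  rw [hc]
  linear_combination (-1 : ℤ) * hA + ((s+t:ℕ):ℤ) * he

lemma KL2 (hst : Nat.Coprime s t) {w : ZMod (s+t) → Bool} (hw1 : cnt s t w = t)
    (hw2 : ((s+t:ℕ):ℤ)^2 ∣ Tw s t w + tgt s t) (c : ZMod (s+t)) :
    dd hst (rotc c w) = -c := by
  have hnz : ((s+t:ℕ):ℤ) ≠ 0 := by have := stz_pos (s := s) (t := t); omega
  set k := c.val with hk
  obtain ⟨e, he⟩ := Tw_rot_iter hw1 k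
  rw [← rotc_val] at he
  have hAv : Aw s t (rotc c w) = Aw s t w + (k:ℤ) * s + ((s+t:ℕ):ℤ) * e := by
    apply mul_left_cancel₀ hnz
    rw [nAw hst]
    rw [he]
    linear_combination (-1 : ℤ) * nAw hst w
  obtain ⟨f, hf⟩ : ((s+t:ℕ):ℤ) ∣ Aw s t w := by
    obtain ⟨g2, hg2⟩ := hw2
    refine ⟨((s+t:ℕ):ℤ) * g2 / ((s+t:ℕ):ℤ) , ?_⟩
    apply mul_left_cancel₀ hnz
    rw [nAw hst, hg2, Int.mul_ediv_cancel_left _ hnz]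
    ring
  rw [dd, hAv, hf]
  have hks : (((k:ℕ)) : ZMod (s+t)) * ((s:ℕ) : ZMod (s+t))
      = c * ((uu s t hst : (ZMod (s+t))ˣ) : ZMod (s+t)) := by
    rw [show (((k:ℕ)) : ZMod (s+t)) = c from ZMod.natCast_rightInverse _]
    rw [show ((s:ℕ) : ZMod (s+t)) = ((uu s t hst : (ZMod (s+t))ˣ) : ZMod (s+t)) from (uu_coe hst).symm]
  have hcast : ((-(((s+t:ℕ):ℤ) * f + (k:ℤ) * s + ((s+t:ℕ):ℤ) * e) : ℤ) : ZMod (s+t))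
      = -(c * ((uu s t hst : (ZMod (s+t))ˣ) : ZMod (s+t))) := by
    push_cast
    linear_combination (-(f : ZMod (s+t)) - (e : ZMod (s+t))) * hst0 s t - hks
  rw [hcast]
  rw [neg_mul, mul_assoc, Units.mul_inv, mul_one]

/-- E3: the rotation bijection. -/
noncomputable def E3 (hst : Nat.Coprime s t) :
    ({w : ZMod (s+t) → Bool // cnt s t w = t ∧ ((s+t:ℕ):ℤ)^2 ∣ Tw s t w + tgt s t}
      × ZMod (s+t)) ≃ {w : ZMod (s+t) → Bool // cnt s t w = t} where
  toFun x := ⟨rotc x.2 x.1.val, by rw [cnt_rotc]; exact x.1.prop.1⟩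
  invFun v := (⟨rotc (dd hst v.val) v.val,
      by rw [cnt_rotc]; exact v.prop, KL1 hst v.prop⟩, -(dd hst v.val))
  left_inv x := by
    obtain ⟨⟨w, hw1, hw2⟩, c⟩ := x
    have hd := KL2 hst hw1 hw2 c
    simp only [Prod.mk.injEq, Subtype.mk.injEq]
    constructor
    · rw [hd, rotc_rotc]
      simp [rotc_zero]
    · rw [hd, neg_neg]
  right_inv v := by
    apply Subtype.ext
    simp only
    rw [rotc_rotc]
    simp [rotc_zero]

end
end Anderson
end Part8b
section Part9
namespace Anderson

variable {s t : ℕ}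

noncomputable def EV [NeZero (s+t)] :
    {w : ZMod (s+t) → Bool // cnt s t w = t} ≃ {A : Finset (ZMod (s+t)) // A.card = t} := by
  classical
  exact {
    toFun := fun w => ⟨Finset.univ.filter (fun j => w.val j = true), w.prop⟩
    invFun := fun A => ⟨fun j => decide (j ∈ A.val), by
      rw [cnt]
      have : Finset.univ.filter (fun j => decide (j ∈ A.val) = true) = A.val := by
        ext j
        simp
      rw [this]
      exact A.prop⟩
    left_inv := fun w => by
      apply Subtype.ext
      funext j
      simp
    right_inv := fun A => by
      apply Subtype.ext
      simp only
      ext j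
      simp }

lemma card_V [NeZero (s+t)] :
    Nat.card {w : ZMod (s+t) → Bool // cnt s t w = t} = (s+t).choose t := by
  classical
  rw [Nat.card_congr (EV (s := s) (t := t))]
  rw [Nat.card_eq_fintype_card]
  rw [Fintype.card_finset_len]
  rw [ZMod.card]

end Anderson
end Part9

/-- **Anderson's theorem.** For relatively prime positive integers `s` and `t`, the
number of `(s,t)`-core partitions is `(1/(s+t)) * C(s+t, s)`: `s + t` divides
`C(s+t, s)` and the number of such partitions is the quotient. -/
theorem count_core_core (s t : ℕ) (hs : 0 < s) (ht : 0 < t) (hst : Nat.Coprime s t) :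
    (s + t) ∣ (s + t).choose s ∧
      Nat.card {p : YPartition // p.IsCore s ∧ p.IsCore t} =
        (s + t).choose s / (s + t) := by
  haveI : NeZero (s+t) := ⟨by omega⟩
  classical
  have E := (Anderson.E1 hs ht).trans (Anderson.E2 hs ht hst)
  have hcards : Nat.card {p : YPartition // p.IsCore s ∧ p.IsCore t}
      = Nat.card {w : ZMod (s+t) → Bool //
          Anderson.cnt s t w = t ∧ ((s+t:ℕ):ℤ)^2 ∣ Anderson.Tw s t w + Anderson.tgt s t} :=
    Nat.card_congr E
  set W := Nat.card {w : ZMod (s+t) → Bool //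
      Anderson.cnt s t w = t ∧ ((s+t:ℕ):ℤ)^2 ∣ Anderson.Tw s t w + Anderson.tgt s t} with hW
  have hchoose : (s+t).choose s = W * (s+t) := by
    have h1 : (s+t).choose s = (s+t).choose t := by
      have := Nat.choose_symm (by omega : s ≤ s + t)
      rw [show s + t - s = t from by omega] at this
      exact this.symm
    rw [h1, ← Anderson.card_V (s := s) (t := t)]
    rw [← Nat.card_congr (Anderson.E3 hst)]
    rw [Nat.card_prod, Nat.card_eq_fintype_card (α := ZMod (s+t)), ZMod.card]
  constructor
  · exact ⟨W, by rw [hchoose]; ring⟩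
  · rw [hcards, hchoose, Nat.mul_div_cancel _ (by omega : 0 < s + t)]
end

section
/- For every positive integer s, the number of partitions that are simultaneously s-core and (s+1)-core equals the s-th Catalan number C_s = (1/(s+1)) * C(2s, s). -/
namespace YPartition

variable (p : YPartition)

lemma lt_conj_iff (i j : ℕ) : i < p.conj j ↔ j < p.parts i := by
  classical
  obtain ⟨N, hN⟩ := p.support_finite
  have hex : ∃ i, p.parts i ≤ j := ⟨N, by rw [hN N le_rfl]; exact Nat.zero_le _⟩
  have h1 : p.parts (Nat.find hex) ≤ j := Nat.find_spec hex
  have h2 : ∀ i, i < Nat.find hex → j < p.parts i := fun i hi =>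
    lt_of_not_ge (Nat.find_min hex hi)
  have hset : {i : ℕ | j < p.parts i} = ↑(Finset.range (Nat.find hex)) := by
    ext a
    simp only [Set.mem_setOf_eq, Finset.coe_range, Set.mem_Iio]
    constructor
    · intro h; by_contra hc; push_neg at hc
      exact absurd (le_trans (p.antitone hc) h1) (not_le.mpr h)
    · exact h2 a
  have hc : p.conj j = Nat.find hex := by
    rw [conj, hset, Set.ncard_coe_finset, Finset.card_range]
  rw [hc]
  constructor
  · exact h2 i
  · intro h; by_contra hcon; push_neg at hcon
    exact absurd (le_trans (p.antitone hcon) h1) (not_le.mpr h)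

lemma conj_anti {j j' : ℕ} (h : j ≤ j') : p.conj j' ≤ p.conj j := by
  by_contra hc
  push_neg at hc
  have h1 := (p.lt_conj_iff (p.conj j) j').mp hc
  have h2 := (p.lt_conj_iff (p.conj j) j).mpr (by omega)
  omega

lemma conj_le (j : ℕ) : p.conj j ≤ p.conj 0 := p.conj_anti (Nat.zero_le j)

/-- The first-column hook length of row `i` (for `i < p.conj 0`). -/
noncomputable def bfun (i : ℕ) : ℕ := p.parts i + (p.conj 0 - 1 - i)

/-- The `j`-th smallest natural number not a first-column hook length. -/
noncomputable def cfun (j : ℕ) : ℕ := p.conj 0 + j - p.conj j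

/-- The beta set: the set of first-column hook lengths. -/
noncomputable def beta : Finset ℕ := (Finset.range (p.conj 0)).image p.bfun

lemma mem_beta {x : ℕ} : x ∈ p.beta ↔ ∃ i, i < p.conj 0 ∧ p.bfun i = x := by
  simp [beta, Finset.mem_image, Finset.mem_range]

lemma cfun_zero : p.cfun 0 = 0 := by simp [cfun]

lemma cfun_lt_succ (j : ℕ) : p.cfun j < p.cfun (j + 1) := by
  have h1 := p.conj_anti (show j ≤ j + 1 by omega)
  have h2 := p.conj_le j
  have h3 := p.conj_le (j + 1)
  unfold cfun
  omega

lemma le_cfun (j : ℕ) : j ≤ p.cfun j := by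
  induction j with
  | zero => simp [cfun_zero]
  | succ n ih => have := p.cfun_lt_succ n; omega

lemma cfun_not_mem (j : ℕ) : p.cfun j ∉ p.beta := by
  rw [mem_beta]
  rintro ⟨i, hik, hbi⟩
  have h1 := p.lt_conj_iff i j
  have h2 := p.conj_le j
  unfold bfun cfun at hbi
  by_cases hij : j < p.parts i
  · omega
  · omega

lemma mem_beta_of_between {j x : ℕ} (h1 : p.cfun j < x) (h2 : x < p.cfun (j + 1)) :
    x ∈ p.beta := by
  rw [mem_beta]
  refine ⟨p.conj 0 + j - x, ?_, ?_⟩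
  · have a1 := p.conj_le j
    have a2 := p.conj_anti (Nat.le_succ j)
    unfold cfun at h1 h2
    omega
  · have a1 := p.conj_le j
    have a2 := p.conj_anti (Nat.le_succ j)
    have a3 := p.lt_conj_iff (p.conj 0 + j - x) j
    have a4 := p.lt_conj_iff (p.conj 0 + j - x) (j + 1)
    unfold cfun at h1 h2
    unfold bfun
    omega

lemma exists_cfun_eq {x : ℕ} (hx : x ∉ p.beta) : ∃ j, p.cfun j = x := by
  by_contra hne
  push_neg at hne
  have h0 : (fun j => p.cfun j ≤ x) 0 := by simp [p.cfun_zero]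
  have hspec := Nat.findGreatest_spec (P := fun j => p.cfun j ≤ x) (m := 0) (Nat.zero_le x) h0
  have hle := Nat.findGreatest_le (P := fun j => p.cfun j ≤ x) x
  have hlt : p.cfun (Nat.findGreatest (fun j => p.cfun j ≤ x) x) < x :=
    lt_of_le_of_ne hspec (hne _)
  have hj0x : Nat.findGreatest (fun j => p.cfun j ≤ x) x < x := by
    have := p.le_cfun (Nat.findGreatest (fun j => p.cfun j ≤ x) x); omega
  have hgt := Nat.findGreatest_is_greatest
    (P := fun j => p.cfun j ≤ x) (n := x)
    (k := Nat.findGreatest (fun j => p.cfun j ≤ x) x + 1) (by omega) (by omega)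
  simp only [not_le] at hgt
  exact hx (p.mem_beta_of_between hlt hgt)

lemma one_le_bfun {i : ℕ} (hi : i < p.conj 0) : 1 ≤ p.bfun i := by
  have := (p.lt_conj_iff i 0).mp hi
  unfold bfun; omega

lemma hook_eq {i j : ℕ} (hj : j < p.parts i) :
    p.hook i j = p.bfun i - p.cfun j ∧ p.cfun j < p.bfun i ∧ i < p.conj 0 := by
  have h1 := (p.lt_conj_iff i j).mpr hj
  have h3 := (p.lt_conj_iff i 0).mpr (by omega)
  have h2 := p.conj_le j
  unfold hook bfun cfun
  exact ⟨by omega, by omega, h3⟩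

lemma sub_mul_mem_beta {t : ℕ} (hcl : ∀ x ∈ p.beta, t ≤ x → x - t ∈ p.beta) :
    ∀ m x, x ∈ p.beta → m * t ≤ x → x - m * t ∈ p.beta := by
  intro m
  induction m with
  | zero => intro x hx _; simpa using hx
  | succ n ih =>
    intro x hx hle
    have e : (n + 1) * t = n * t + t := by ring
    have h2 := ih x hx (by omega)
    have h3 := hcl _ h2 (by omega)
    have e2 : x - n * t - t = x - (n + 1) * t := by omega
    rwa [e2] at h3

lemma isCore_iff {t : ℕ} (ht : 0 < t) :
    p.IsCore t ↔ ∀ x ∈ p.beta, t ≤ x → x - t ∈ p.beta := by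
  constructor
  · intro hcore x hx htx
    by_contra hnot
    obtain ⟨j, hj⟩ := p.exists_cfun_eq hnot
    obtain ⟨i, hik, hbi⟩ := p.mem_beta.mp hx
    have h1 := p.lt_conj_iff i j
    have h2 := p.conj_le j
    have hpi : 0 < p.parts i := (p.lt_conj_iff i 0).mp hik
    unfold bfun at hbi
    unfold cfun at hj
    have hjlt : j < p.parts i := by omega
    have hhook : p.hook i j = t := by unfold hook; omega
    exact hcore i j hjlt (hhook ▸ dvd_refl t)
  · intro hcl i j hj hdvd
    obtain ⟨heq, hlt, hik⟩ := p.hook_eq hj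
    obtain ⟨m, hm⟩ := hdvd
    have hc : m * t = t * m := Nat.mul_comm m t
    have hmem := p.sub_mul_mem_beta hcl m (p.bfun i) (p.mem_beta.mpr ⟨i, hik, rfl⟩)
      (by omega)
    have e3 : p.bfun i - m * t = p.cfun j := by omega
    rw [e3] at hmem
    exact p.cfun_not_mem j hmem

lemma bfun_lt {i i' : ℕ} (h : i < i') (h2 : i' < p.conj 0) : p.bfun i' < p.bfun i := by
  have h3 := p.antitone (le_of_lt h)
  have h4 := (p.lt_conj_iff i' 0).mp h2
  unfold bfun
  omega

lemma card_beta : p.beta.card = p.conj 0 := by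
  rw [beta, Finset.card_image_of_injOn, Finset.card_range]
  intro i hi j hj hij
  simp only [Finset.coe_range, Set.mem_Iio] at hi hj
  by_contra hne
  rcases Nat.lt_or_ge i j with h | h
  · exact absurd hij (Nat.ne_of_gt (p.bfun_lt h hj))
  · have h' : j < i := by omega
    exact absurd hij (Nat.ne_of_lt (p.bfun_lt h' hi))

lemma conj_zero_eq {q : YPartition} {k : ℕ} (h : ∀ i, 0 < q.parts i ↔ i < k) :
    q.conj 0 = k := by
  have h1 := q.lt_conj_iff k 0
  have h2 := q.lt_conj_iff (q.conj 0) 0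
  have h3 := h k
  have h4 := h (q.conj 0)
  omega

lemma parts_eq_zero {i : ℕ} (h : p.conj 0 ≤ i) : p.parts i = 0 := by
  have := p.lt_conj_iff i 0
  omega

end YPartition

section OfFinset

open YPartition

lemma strictMono_fin_add_le {k : ℕ} {f : Fin k → ℕ} (hf : StrictMono f) :
    ∀ (d : ℕ) (a a' : Fin k), a.val + d = a'.val → f a + d ≤ f a' := by
  intro d
  induction d with
  | zero =>
    intro a a' h
    have : a = a' := Fin.ext (by omega)
    subst this; omega
  | succ n ih =>
    intro a a' h
    have hlt : a.val + n < k := by omega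
    have h1 := ih a ⟨a.val + n, hlt⟩ rfl
    have h2 := hf (show (⟨a.val + n, hlt⟩ : Fin k) < a' by
      simp only [Fin.lt_def]; omega)
    omega

/-- The partition whose beta set (set of first-column hook lengths) is `B`. -/
noncomputable def ofFinset (B : Finset ℕ) : YPartition where
  parts i := if h : i < B.card then
      B.orderEmbOfFin rfl ⟨B.card - 1 - i, by omega⟩ - (B.card - 1 - i) else 0
  antitone := by
    intro i j hij
    by_cases hj : j < B.card
    · have hi : i < B.card := by omega
      rw [dif_pos hi, dif_pos hj]
      have := strictMono_fin_add_le (B.orderEmbOfFin rfl).strictMono (j - i)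
        ⟨B.card - 1 - j, by omega⟩ ⟨B.card - 1 - i, by omega⟩ (by dsimp only; omega)
      omega
    · rw [dif_neg hj]
      exact Nat.zero_le _
  support_finite := ⟨B.card, fun i hi => dif_neg (by omega)⟩

variable {B : Finset ℕ}

lemma emb_ge (hB : 0 ∉ B) (a : Fin B.card) :
    a.val + 1 ≤ B.orderEmbOfFin rfl a := by
  have hpos : 0 < B.card := Nat.pos_of_ne_zero (by rintro h; exact absurd (h ▸ a).isLt (by omega))
  have h0 : 1 ≤ B.orderEmbOfFin rfl ⟨0, hpos⟩ := by
    have hmem := B.orderEmbOfFin_mem rfl ⟨0, hpos⟩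
    rcases Nat.eq_zero_or_pos (B.orderEmbOfFin rfl ⟨0, hpos⟩) with h | h
    · exact absurd (h ▸ hmem) hB
    · omega
  have := strictMono_fin_add_le (B.orderEmbOfFin rfl).strictMono a.val ⟨0, hpos⟩ a
    (by simp)
  omega

lemma ofFinset_parts_pos_iff (hB : 0 ∉ B) (i : ℕ) :
    0 < (ofFinset B).parts i ↔ i < B.card := by
  constructor
  · intro h
    by_contra hc
    simp only [ofFinset, dif_neg hc] at h
    omega
  · intro h
    have := emb_ge hB ⟨B.card - 1 - i, by omega⟩
    dsimp only at this
    simp only [ofFinset, dif_pos h]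
    omega

lemma ofFinset_conj_zero (hB : 0 ∉ B) : (ofFinset B).conj 0 = B.card :=
  conj_zero_eq (ofFinset_parts_pos_iff hB)

lemma ofFinset_bfun (hB : 0 ∉ B) {i : ℕ} (hi : i < B.card) :
    (ofFinset B).bfun i = B.orderEmbOfFin rfl ⟨B.card - 1 - i, by omega⟩ := by
  have hK := ofFinset_conj_zero hB
  have hge := emb_ge hB ⟨B.card - 1 - i, by omega⟩
  dsimp only at hge
  unfold bfun
  rw [hK]
  simp only [ofFinset, dif_pos hi]
  omega

lemma beta_ofFinset (hB : 0 ∉ B) : (ofFinset B).beta = B := by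
  have hK := ofFinset_conj_zero hB
  ext x
  rw [mem_beta, hK]
  constructor
  · rintro ⟨i, hik, hbi⟩
    rw [ofFinset_bfun hB hik] at hbi
    exact hbi ▸ B.orderEmbOfFin_mem rfl _
  · intro hx
    have hr : x ∈ Set.range (B.orderEmbOfFin rfl) := by
      rw [Finset.range_orderEmbOfFin]; exact hx
    obtain ⟨a, ha⟩ := hr
    refine ⟨B.card - 1 - a.val, by omega, ?_⟩
    rw [ofFinset_bfun hB (by omega), ← ha]
    congr 1
    apply Fin.ext
    simp
    omega

lemma YPartition.ext' {p q : YPartition} (h : ∀ i, p.parts i = q.parts i) : p = q := by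
  obtain ⟨pp, pa, ps⟩ := p
  obtain ⟨qp, qa, qs⟩ := q
  simp only at h
  have hpq : pp = qp := funext h
  subst hpq
  rfl

lemma ofFinset_beta (p : YPartition) : ofFinset p.beta = p := by
  have hcard := p.card_beta
  have hf : ∀ a : Fin p.beta.card, (fun a : Fin p.beta.card =>
      p.bfun (p.conj 0 - 1 - a.val)) a ∈ p.beta := by
    intro a
    exact p.mem_beta.mpr ⟨p.conj 0 - 1 - a.val, by omega, rfl⟩
  have hmono : StrictMono (fun a : Fin p.beta.card => p.bfun (p.conj 0 - 1 - a.val)) := by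
    intro a a' haa
    have h1 : a.val < a'.val := haa
    exact p.bfun_lt (by omega) (by omega)
  have huniq := Finset.orderEmbOfFin_unique (h := rfl) hf hmono
  -- prove parts equal
  have hparts : ∀ i, (ofFinset p.beta).parts i = p.parts i := by
    intro i
    by_cases hi : i < p.beta.card
    · have hemb : p.beta.orderEmbOfFin rfl ⟨p.beta.card - 1 - i, by omega⟩ = p.bfun i := by
        rw [← congrFun huniq ⟨p.beta.card - 1 - i, by omega⟩]
        show p.bfun (p.conj 0 - 1 - (p.beta.card - 1 - i)) = p.bfun i
        congr 1
        omega
      rw [ofFinset]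
      simp only [dif_pos hi, hemb]
      unfold bfun
      omega
    · rw [ofFinset]
      simp only [dif_neg hi]
      exact (p.parts_eq_zero (by omega)).symm
  exact YPartition.ext' hparts
end OfFinset

/-- The equivalence between partitions and their beta sets. -/
noncomputable def betaEquiv : YPartition ≃ {B : Finset ℕ // 0 ∉ B} where
  toFun p := ⟨p.beta, by
    intro h0
    obtain ⟨i, hik, hb⟩ := p.mem_beta.mp h0
    have := p.one_le_bfun hik
    omega⟩
  invFun B := ofFinset B.1
  left_inv p := ofFinset_beta p
  right_inv B := Subtype.ext (beta_ofFinset B.2)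

section Paths

/-- Łukasiewicz-type path condition: starts at `h`, each step up by at most 1. -/
abbrev pathCond (n h : ℕ) (m : Fin (n + 1) → ℕ) : Prop :=
  m ⟨0, Nat.succ_pos n⟩ = h ∧ ∀ i, (hi : i < n) → m ⟨i + 1, by omega⟩ ≤ m ⟨i, by omega⟩ + 1

/-- The set of paths. -/
abbrev PathSet (n h : ℕ) : Type := {m : Fin (n + 1) → ℕ // pathCond n h m}

/-- Counting function for paths. -/
def MM : ℕ → ℕ → ℕ
  | 0, _ => 1
  | n + 1, h => ∑ h' ∈ Finset.range (h + 2), MM n h'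

lemma heq_subtype {α : Type*} {p q : α → Prop} (h : p = q) {x : {a // p a}} {y : {a // q a}}
    (hxy : x.1 = y.1) : HEq x y := by subst h; exact heq_of_eq (Subtype.ext hxy)

lemma sigma_path_ext {n h : ℕ} (x y : Σ h' : Fin (h + 2), PathSet n h'.val)
    (h1 : x.1 = y.1) (h2 : x.2.1 = y.2.1) : x = y := by
  obtain ⟨a, b⟩ := x
  obtain ⟨c, d⟩ := y
  simp only at h1
  cases h1
  exact congrArg _ (Subtype.ext h2)

def pathEquivSucc (n h : ℕ) : PathSet (n + 1) h ≃ Σ h' : Fin (h + 2), PathSet n h'.val where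
  toFun m := ⟨⟨m.1 ⟨1, by omega⟩, by
      have h1 : m.1 ⟨1, by omega⟩ ≤ m.1 ⟨0, by omega⟩ + 1 := m.2.2 0 (by omega)
      have h0 : m.1 ⟨0, by omega⟩ = h := m.2.1
      omega⟩,
    ⟨fun i => m.1 ⟨i.val + 1, by omega⟩, by
      constructor
      · rfl
      · intro i hi
        have : m.1 ⟨i + 1 + 1, by omega⟩ ≤ m.1 ⟨i + 1, by omega⟩ + 1 := m.2.2 (i + 1) (by omega)
        exact this⟩⟩
  invFun x := ⟨fun i => if i.val = 0 then h else x.2.1 ⟨i.val - 1, by omega⟩, by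
    constructor
    · rfl
    · intro i hi
      by_cases h0 : i = 0
      · subst h0
        show (if (1 : ℕ) = 0 then h else x.2.1 ⟨1 - 1, by omega⟩) ≤
          (if (0 : ℕ) = 0 then h else x.2.1 ⟨0 - 1, by omega⟩) + 1
        rw [if_neg (by omega : ¬ (1 : ℕ) = 0), if_pos rfl]
        have hlt := x.1.isLt
        have hv : x.2.1 ⟨0, by omega⟩ = x.1.val := x.2.2.1
        have e : (⟨1 - 1, by omega⟩ : Fin (n + 1)) = ⟨0, by omega⟩ := rfl
        rw [e, hv]
        omega
      · show (if i + 1 = 0 then h else x.2.1 ⟨i + 1 - 1, by omega⟩) ≤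
          (if i = 0 then h else x.2.1 ⟨i - 1, by omega⟩) + 1
        rw [if_neg (by omega : ¬ i + 1 = 0), if_neg h0]
        have hstep : x.2.1 ⟨i - 1 + 1, by omega⟩ ≤ x.2.1 ⟨i - 1, by omega⟩ + 1 :=
          x.2.2.2 (i - 1) (by omega)
        have e1 : (⟨i + 1 - 1, by omega⟩ : Fin (n + 1)) = ⟨i - 1 + 1, by omega⟩ := by
          apply Fin.ext
          show i + 1 - 1 = i - 1 + 1
          omega
        rw [e1]
        exact hstep⟩
  left_inv m := by
    apply Subtype.ext
    funext i
    show (if i.val = 0 then h else m.1 ⟨i.val - 1 + 1, by omega⟩) = m.1 i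
    by_cases h0 : i.val = 0
    · rw [if_pos h0]
      have h0' : i = ⟨0, Nat.succ_pos (n + 1)⟩ := Fin.ext h0
      rw [h0']
      exact m.2.1.symm
    · rw [if_neg h0]
      exact congrArg m.1 (Fin.ext (show i.val - 1 + 1 = i.val by omega))
  right_inv x := by
    obtain ⟨h', m⟩ := x
    apply sigma_path_ext
    · apply Fin.ext
      show (if (1 : ℕ) = 0 then h else m.1 ⟨1 - 1, by omega⟩) = h'.val
      rw [if_neg (by omega : ¬ (1 : ℕ) = 0)]
      exact m.2.1
    · funext i
      show (if i.val + 1 = 0 then h else m.1 ⟨i.val + 1 - 1, by omega⟩) = m.1 i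
      rw [if_neg (by omega : ¬ i.val + 1 = 0)]
      exact congrArg m.1 (Fin.ext (show i.val + 1 - 1 = i.val by omega))

lemma pathset_equiv_fin (n : ℕ) : ∀ h, Nonempty (PathSet n h ≃ Fin (MM n h)) := by
  induction n with
  | zero =>
    intro h
    refine ⟨⟨fun _ => ⟨0, by simp [MM]⟩,
      fun _ => ⟨fun _ => h, rfl, fun i hi => absurd hi (by omega)⟩,
      fun m => ?_, fun x => ?_⟩⟩
    · apply Subtype.ext
      funext i
      rw [show i = ⟨0, Nat.succ_pos 0⟩ from Fin.ext (by omega)]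
      exact m.2.1.symm
    · apply Fin.ext
      have hx := x.isLt
      simp only [MM] at hx ⊢
      omega
  | succ n ih =>
    intro h
    have e : ∀ h' : Fin (h + 2), PathSet n h'.val ≃ Fin (MM n h'.val) :=
      fun h' => (ih h'.val).some
    refine ⟨(pathEquivSucc n h).trans ((Equiv.sigmaCongrRight e).trans ?_)⟩
    refine Fintype.equivFinOfCardEq ?_
    rw [Fintype.card_sigma]
    simp only [Fintype.card_fin]
    show _ = ∑ h' ∈ Finset.range (h + 2), MM n h'
    exact Fin.sum_univ_eq_sum_range _ _

lemma triangle_sum (f : ℕ → ℕ → ℕ) :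
    ∀ N, ∑ j ∈ Finset.range (N + 1), ∑ i ∈ Finset.range (N + 1 - j), f j i =
      ∑ l ∈ Finset.range (N + 1), ∑ p ∈ Finset.range (l + 1), f p (l - p) := by
  intro N
  induction N with
  | zero => simp
  | succ N ihN =>
    have step1 : ∀ j ∈ Finset.range (N + 2), ∑ i ∈ Finset.range (N + 2 - j), f j i =
        (∑ i ∈ Finset.range (N + 1 - j), f j i) + f j (N + 1 - j) := by
      intro j hj
      rw [Finset.mem_range] at hj
      rw [show N + 2 - j = (N + 1 - j) + 1 by omega, Finset.sum_range_succ]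
    rw [Finset.sum_congr rfl step1, Finset.sum_add_distrib]
    have step2 : ∑ j ∈ Finset.range (N + 2), ∑ i ∈ Finset.range (N + 1 - j), f j i =
        ∑ j ∈ Finset.range (N + 1), ∑ i ∈ Finset.range (N + 1 - j), f j i := by
      rw [Finset.sum_range_succ, show N + 1 - (N + 1) = 0 by omega]
      simp
    rw [step2, ihN]
    conv_rhs => rw [Finset.sum_range_succ]

lemma MM_col (n : ℕ) : ∀ h, MM n (h + 1) =
    ∑ j ∈ Finset.range (n + 1), catalan j * MM (n - j) h := by
  induction n using Nat.strong_induction_on with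
  | _ n ih =>
    intro h
    match n with
    | 0 => simp [MM]
    | Nat.succ n =>
      have e1 : MM (n + 1) (h + 1) = MM (n + 1) h + MM n (h + 2) := by
        show (∑ h' ∈ Finset.range (h + 1 + 2), MM n h') = _
        rw [show h + 1 + 2 = (h + 2) + 1 by omega, Finset.sum_range_succ]
        rfl
      have e2 : MM n (h + 2) = ∑ j ∈ Finset.range (n + 1), catalan j * MM (n - j) (h + 1) :=
        ih n (by omega) (h + 1)
      have e3 : ∀ j ∈ Finset.range (n + 1), catalan j * MM (n - j) (h + 1) =
          ∑ i ∈ Finset.range (n + 1 - j), catalan j * (catalan i * MM (n - j - i) h) := by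
        intro j hj
        rw [Finset.mem_range] at hj
        rw [ih (n - j) (by omega) h, Finset.mul_sum]
        exact Finset.sum_congr (by rw [show n - j + 1 = n + 1 - j by omega]) (fun i _ => rfl)
      have e4 : MM n (h + 2) = ∑ j ∈ Finset.range (n + 1),
          ∑ i ∈ Finset.range (n + 1 - j), catalan j * catalan i * MM (n - j - i) h := by
        rw [e2, Finset.sum_congr rfl e3]
        exact Finset.sum_congr rfl (fun j _ => Finset.sum_congr rfl (fun i _ => by ring)
      )
      have e5 : MM n (h + 2) = ∑ l ∈ Finset.range (n + 1),
          ∑ p ∈ Finset.range (l + 1), catalan p * catalan (l - p) * MM (n - l) h := by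
        rw [e4, triangle_sum (fun j i => catalan j * catalan i * MM (n - j - i) h) n]
        refine Finset.sum_congr rfl (fun l hl => Finset.sum_congr rfl (fun p hp => ?_))
        rw [Finset.mem_range] at hl hp
        rw [show n - p - (l - p) = n - l by omega]
      have e6 : MM n (h + 2) = ∑ l ∈ Finset.range (n + 1), catalan (l + 1) * MM (n - l) h := by
        rw [e5]
        refine Finset.sum_congr rfl (fun l _ => ?_)
        rw [catalan_succ l, Fin.sum_univ_eq_sum_range (fun i => catalan i * catalan (l - i)),
          Finset.sum_mul]
      rw [e1, e6]
      rw [Finset.sum_range_succ' (fun j => catalan j * MM (n + 1 - j) h) (n + 1)]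
      simp only [catalan_zero, one_mul, Nat.sub_zero]
      have e7 : ∀ l ∈ Finset.range (n + 1), catalan (l + 1) * MM (n + 1 - (l + 1)) h =
          catalan (l + 1) * MM (n - l) h := by
        intro l hl
        rw [show n + 1 - (l + 1) = n - l by omega]
      rw [Finset.sum_congr rfl e7]
      omega

lemma MM_zero : ∀ n, MM n 0 = catalan (n + 1) := by
  intro n
  induction n using Nat.strong_induction_on with
  | _ n ih =>
    match n with
    | 0 => simp [MM, catalan_one]
    | Nat.succ n =>
      have e1 : MM (n + 1) 0 = MM n 0 + MM n 1 := by
        show (∑ h' ∈ Finset.range 2, MM n h') = _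
        rw [Finset.sum_range_succ, Finset.sum_range_succ]
        simp
      have e2 : MM n 1 = ∑ j ∈ Finset.range (n + 1), catalan j * MM (n - j) 0 := MM_col n 0
      have e3 : MM n 1 = ∑ j ∈ Finset.range (n + 1), catalan j * catalan (n + 1 - j) := by
        rw [e2]
        refine Finset.sum_congr rfl (fun j hj => ?_)
        rw [Finset.mem_range] at hj
        rw [ih (n - j) (by omega), show n - j + 1 = n + 1 - j by omega]
      rw [e1, e3, ih n (by omega), catalan_succ (n + 1),
        Fin.sum_univ_eq_sum_range (fun i => catalan i * catalan (n + 1 - i))]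
      conv_rhs => rw [Finset.sum_range_succ]
      simp only [Nat.sub_self, catalan_zero, mul_one]
      omega

end Paths

section CoreBij

/-- Closure of a finset under subtraction of `t`. -/
abbrev Cl (t : ℕ) (B : Finset ℕ) : Prop := ∀ x ∈ B, t ≤ x → x - t ∈ B

lemma downclosed_eq_range {F : Finset ℕ} (h : ∀ a, a + 1 ∈ F → a ∈ F) :
    F = Finset.range F.card := by
  have hdc : ∀ d x, x ∈ F → x - d ∈ F := by
    intro d
    induction d with
    | zero => intro x hx; simpa using hx
    | succ c ih =>
      intro x hx
      rcases Nat.lt_or_ge x (c + 1) with hlt | hge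
      · have h1 := ih x hx
        rw [show x - (c + 1) = x - c by omega]
        exact h1
      · have h1 := ih x hx
        exact h (x - (c + 1)) (by rwa [show x - (c + 1) + 1 = x - c by omega])
  have hsub : F ⊆ Finset.range F.card := by
    intro x hx
    rw [Finset.mem_range]
    by_contra hc
    push_neg at hc
    have hsub2 : Finset.range (x + 1) ⊆ F := by
      intro y hy
      rw [Finset.mem_range] at hy
      have h3 := hdc (x - y) x hx
      rwa [show x - (x - y) = y by omega] at h3
    have hcard := Finset.card_le_card hsub2
    rw [Finset.card_range] at hcard
    omega
  exact Finset.eq_of_subset_of_card_le hsub (by rw [Finset.card_range])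

/-- The set of `q` such that `q*(n+1) + r` lies in `B`. -/
def Qset (n : ℕ) (B : Finset ℕ) (r : ℕ) : Finset ℕ :=
  (B.filter (fun x => x % (n + 1) = r)).image (fun x => x / (n + 1))

lemma mem_Qset {n r q : ℕ} {B : Finset ℕ} (hr : r < n + 1) :
    q ∈ Qset n B r ↔ q * (n + 1) + r ∈ B := by
  simp only [Qset, Finset.mem_image, Finset.mem_filter]
  constructor
  · rintro ⟨x, ⟨hxB, hmod⟩, hdiv⟩
    have e := Nat.div_add_mod x (n + 1)
    rw [hdiv, hmod] at e
    have e2 : q * (n + 1) = (n + 1) * q := Nat.mul_comm _ _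
    rw [show q * (n + 1) + r = x by omega]
    exact hxB
  · intro hB
    refine ⟨q * (n + 1) + r, ⟨hB, ?_⟩, ?_⟩
    · rw [Nat.mul_comm q (n + 1), Nat.mul_add_mod]
      exact Nat.mod_eq_of_lt hr
    · rw [Nat.mul_comm q (n + 1), Nat.mul_add_div (by omega : 0 < n + 1),
        Nat.div_eq_of_lt hr]
      omega

variable {n : ℕ} {B : Finset ℕ}

lemma no_multiples (h0 : 0 ∉ B) (h1 : Cl (n + 1) B) : ∀ q, q * (n + 1) ∉ B := by
  intro q
  induction q with
  | zero => simpa using h0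
  | succ c ih =>
    intro hq
    have e : (c + 1) * (n + 1) = c * (n + 1) + (n + 1) := by ring
    have h2 := h1 _ hq (by omega)
    rw [show (c + 1) * (n + 1) - (n + 1) = c * (n + 1) by omega] at h2
    exact ih h2

lemma Qset_eq_range (h1 : Cl (n + 1) B) {r : ℕ} (hr : r < n + 1) :
    Qset n B r = Finset.range (Qset n B r).card := by
  apply downclosed_eq_range
  intro a ha
  rw [mem_Qset hr] at ha ⊢
  have e : (a + 1) * (n + 1) + r = a * (n + 1) + r + (n + 1) := by ring
  have h2 := h1 _ ha (by omega)
  rwa [show (a + 1) * (n + 1) + r - (n + 1) = a * (n + 1) + r by omega] at h2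

lemma Qset_zero_card (h0 : 0 ∉ B) (h1 : Cl (n + 1) B) : (Qset n B 0).card = 0 := by
  rw [Finset.card_eq_zero, Finset.eq_empty_iff_forall_notMem]
  intro q hq
  rw [mem_Qset (by omega : (0 : ℕ) < n + 1)] at hq
  rw [Nat.add_zero] at hq
  exact no_multiples h0 h1 q hq

lemma Qset_card_step (h0 : 0 ∉ B) (h1 : Cl (n + 1) B) (h2 : Cl (n + 2) B) {r : ℕ}
    (hr : r + 1 < n + 1) : (Qset n B (r + 1)).card ≤ (Qset n B r).card + 1 := by
  have hsub : Qset n B (r + 1) ⊆ Finset.range ((Qset n B r).card + 1) := by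
    intro q hq
    rw [Finset.mem_range]
    rcases Nat.eq_zero_or_pos q with rfl | hqpos
    · omega
    · rw [mem_Qset (by omega)] at hq
      have hmul : n + 1 ≤ q * (n + 1) := Nat.le_mul_of_pos_left (n + 1) hqpos
      have h3 := h2 _ hq (by omega)
      obtain ⟨c, rfl⟩ : ∃ c, q = c + 1 := ⟨q - 1, by omega⟩
      have e2 : (c + 1) * (n + 1) = c * (n + 1) + (n + 1) := by ring
      rw [show (c + 1) * (n + 1) + (r + 1) - (n + 2) = c * (n + 1) + r by omega] at h3
      have hmem := (mem_Qset (by omega : r < n + 1)).mpr h3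
      rw [Qset_eq_range h1 (by omega : r < n + 1), Finset.mem_range] at hmem
      omega
  have := Finset.card_le_card hsub
  rwa [Finset.card_range] at this

/-- The finset encoded by a path. -/
def Bset (n : ℕ) (m : Fin (n + 1) → ℕ) : Finset ℕ :=
  (Finset.range ((n + 1) * (n + 1))).filter
    (fun x => x / (n + 1) < m ⟨x % (n + 1), Nat.mod_lt x (by omega)⟩)

lemma path_le {m : Fin (n + 1) → ℕ} (hm : pathCond n 0 m) :
    ∀ i, (hi : i < n + 1) → m ⟨i, hi⟩ ≤ i := by
  intro i
  induction i with
  | zero =>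
    intro hi
    have h0 : m ⟨0, hi⟩ = 0 := hm.1
    omega
  | succ c ih =>
    intro hi
    have hstep : m ⟨c + 1, hi⟩ ≤ m ⟨c, by omega⟩ + 1 := hm.2 c (by omega)
    have hc : m ⟨c, by omega⟩ ≤ c := ih (by omega)
    omega

lemma mem_Bset {m : Fin (n + 1) → ℕ} (hm : pathCond n 0 m) {x : ℕ} :
    x ∈ Bset n m ↔ x / (n + 1) < m ⟨x % (n + 1), Nat.mod_lt x (by omega)⟩ := by
  simp only [Bset, Finset.mem_filter, Finset.mem_range]
  constructor
  · exact fun h => h.2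
  · intro h
    refine ⟨?_, h⟩
    have hle := path_le hm (x % (n + 1)) (Nat.mod_lt x (by omega))
    have hmod : x % (n + 1) < n + 1 := Nat.mod_lt x (by omega)
    have hdiv : x / (n + 1) < n + 1 := by omega
    exact (Nat.div_lt_iff_lt_mul (by omega : 0 < n + 1)).mp hdiv

lemma mem_Bset' {m : Fin (n + 1) → ℕ} (hm : pathCond n 0 m) {x q r : ℕ} (hr : r < n + 1)
    (hx : x = q * (n + 1) + r) : x ∈ Bset n m ↔ q < m ⟨r, hr⟩ := by
  subst hx
  rw [mem_Bset hm]
  have e1 : (q * (n + 1) + r) % (n + 1) = r := by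
    rw [Nat.mul_comm q (n + 1), Nat.mul_add_mod]
    exact Nat.mod_eq_of_lt hr
  have e2 : (q * (n + 1) + r) / (n + 1) = q := by
    rw [Nat.mul_comm q (n + 1), Nat.mul_add_div (by omega : 0 < n + 1), Nat.div_eq_of_lt hr]
    omega
  rw [e2]
  constructor
  · intro h
    rwa [show (⟨(q * (n + 1) + r) % (n + 1), Nat.mod_lt _ (by omega)⟩ : Fin (n + 1)) =
      ⟨r, hr⟩ from Fin.ext e1] at h
  · intro h
    rwa [show (⟨(q * (n + 1) + r) % (n + 1), Nat.mod_lt _ (by omega)⟩ : Fin (n + 1)) =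
      ⟨r, hr⟩ from Fin.ext e1]

lemma Bset_not_mem_zero {m : Fin (n + 1) → ℕ} (hm : pathCond n 0 m) : 0 ∉ Bset n m := by
  intro hx
  rw [mem_Bset' hm (by omega : (0:ℕ) < n + 1) (by omega : (0:ℕ) = 0 * (n + 1) + 0)] at hx
  have h0 : m ⟨0, by omega⟩ = 0 := hm.1
  omega

lemma Bset_cl1 {m : Fin (n + 1) → ℕ} (hm : pathCond n 0 m) : Cl (n + 1) (Bset n m) := by
  intro x hx hge
  have hmod : x % (n + 1) < n + 1 := Nat.mod_lt x (by omega)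
  rw [mem_Bset hm] at hx
  have hq1 : 1 ≤ x / (n + 1) := (Nat.one_le_div_iff (by omega)).mpr hge
  obtain ⟨c, hc⟩ : ∃ c, x / (n + 1) = c + 1 := ⟨x / (n + 1) - 1, by omega⟩
  have e := Nat.div_add_mod x (n + 1)
  rw [hc] at e hx
  have emul : (n + 1) * (c + 1) = c * (n + 1) + (n + 1) := by ring
  rw [mem_Bset' hm hmod (show x - (n + 1) = c * (n + 1) + x % (n + 1) by omega)]
  omega

lemma Bset_cl2 {m : Fin (n + 1) → ℕ} (hm : pathCond n 0 m) : Cl (n + 2) (Bset n m) := by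
  intro x hx hge
  have hmod : x % (n + 1) < n + 1 := Nat.mod_lt x (by omega)
  rw [mem_Bset hm] at hx
  have hq1 : 1 ≤ x / (n + 1) := (Nat.one_le_div_iff (by omega)).mpr (by omega)
  obtain ⟨c, hc⟩ : ∃ c, x / (n + 1) = c + 1 := ⟨x / (n + 1) - 1, by omega⟩
  have e := Nat.div_add_mod x (n + 1)
  rw [hc] at e hx
  have emul : (n + 1) * (c + 1) = c * (n + 1) + (n + 1) := by ring
  -- x % (n+1) cannot be 0
  have hr1 : 1 ≤ x % (n + 1) := by
    by_contra hr0
    push_neg at hr0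
    have hr0' : x % (n + 1) = 0 := by omega
    have h0 : m ⟨x % (n + 1), Nat.mod_lt x (by omega)⟩ = 0 := by
      rw [show (⟨x % (n + 1), Nat.mod_lt x (by omega)⟩ : Fin (n + 1)) =
        ⟨0, Nat.succ_pos n⟩ from Fin.ext hr0']
      exact hm.1
    omega
  have hstep := hm.2 (x % (n + 1) - 1) (by omega)
  rw [show (⟨x % (n + 1) - 1 + 1, by omega⟩ : Fin (n + 1)) =
    ⟨x % (n + 1), hmod⟩ from Fin.ext (show x % (n + 1) - 1 + 1 = x % (n + 1) by omega)] at hstep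
  rw [mem_Bset' hm (show x % (n + 1) - 1 < n + 1 by omega)
    (show x - (n + 2) = c * (n + 1) + (x % (n + 1) - 1) by omega)]
  have hxx : m ⟨x % (n + 1), Nat.mod_lt x (by omega)⟩ = m ⟨x % (n + 1), hmod⟩ := rfl
  rw [hxx] at hx
  omega

lemma Qset_Bset {m : Fin (n + 1) → ℕ} (hm : pathCond n 0 m) (r : Fin (n + 1)) :
    (Qset n (Bset n m) r.val).card = m r := by
  have hQ : Qset n (Bset n m) r.val = Finset.range (m r) := by
    ext q
    rw [mem_Qset r.isLt, mem_Bset' hm r.isLt rfl, Finset.mem_range, Fin.eta]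
  rw [hQ, Finset.card_range]

lemma pathCond_Qset (h0 : 0 ∉ B) (h1 : Cl (n + 1) B) (h2 : Cl (n + 2) B) :
    pathCond n 0 (fun r : Fin (n + 1) => (Qset n B r.val).card) := by
  constructor
  · exact Qset_zero_card h0 h1
  · intro i hi
    exact Qset_card_step h0 h1 h2 (by omega)

lemma Bset_Qset (h0 : 0 ∉ B) (h1 : Cl (n + 1) B) (h2 : Cl (n + 2) B) :
    Bset n (fun r : Fin (n + 1) => (Qset n B r.val).card) = B := by
  have hm := pathCond_Qset h0 h1 h2
  ext x
  rw [mem_Bset hm]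
  have hmod : x % (n + 1) < n + 1 := Nat.mod_lt x (by omega)
  have hchar : x / (n + 1) ∈ Qset n B (x % (n + 1)) ↔
      x / (n + 1) < (Qset n B (x % (n + 1))).card := by
    conv_lhs => rw [Qset_eq_range h1 hmod]
    rw [Finset.mem_range]
  show x / (n + 1) < (Qset n B (x % (n + 1))).card ↔ x ∈ B
  rw [← hchar, mem_Qset hmod]
  have e := Nat.div_add_mod x (n + 1)
  have e2 : x / (n + 1) * (n + 1) = (n + 1) * (x / (n + 1)) := Nat.mul_comm _ _
  rw [show x / (n + 1) * (n + 1) + x % (n + 1) = x by omega]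

/-- The bijection between closed beta sets and paths. -/
noncomputable def coreEquiv (n : ℕ) :
    {B0 : {B : Finset ℕ // 0 ∉ B} // Cl (n + 1) B0.1 ∧ Cl (n + 2) B0.1} ≃
      {m : Fin (n + 1) → ℕ // pathCond n 0 m} where
  toFun B := ⟨fun r => (Qset n B.1.1 r.val).card, pathCond_Qset B.1.2 B.2.1 B.2.2⟩
  invFun m := ⟨⟨Bset n m.1, Bset_not_mem_zero m.2⟩, Bset_cl1 m.2, Bset_cl2 m.2⟩
  left_inv B := by
    apply Subtype.ext
    apply Subtype.ext
    exact Bset_Qset B.1.2 B.2.1 B.2.2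
  right_inv m := by
    apply Subtype.ext
    funext r
    exact Qset_Bset m.2 r

end CoreBij

/-- For every positive integer `s`, the number of `(s, s+1)`-core partitions is the
`s`-th Catalan number `C_s = (1/(s+1)) * C(2s, s)`. -/
theorem count_core_succ (s : ℕ) (hs : 0 < s) :
    Nat.card {p : YPartition // p.IsCore s ∧ p.IsCore (s + 1)} = catalan s ∧
      catalan s = (2 * s).choose s / (s + 1) := by
  obtain ⟨n, rfl⟩ : ∃ n, s = n + 1 := ⟨s - 1, by omega⟩
  constructor
  · have e1 : {p : YPartition // p.IsCore (n + 1) ∧ p.IsCore (n + 1 + 1)} ≃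
        {B0 : {B : Finset ℕ // 0 ∉ B} // Cl (n + 1) B0.1 ∧ Cl (n + 2) B0.1} := by
      refine Equiv.subtypeEquiv betaEquiv (fun p => ?_)
      have hb : (betaEquiv p).1 = p.beta := rfl
      rw [hb]
      exact and_congr (p.isCore_iff (by omega)) (p.isCore_iff (by omega))
    obtain ⟨e3⟩ := pathset_equiv_fin n 0
    have hc := Nat.card_eq_of_equiv_fin ((e1.trans (coreEquiv n)).trans e3)
    rw [hc, MM_zero n]
  · rw [catalan_eq_centralBinom_div]
    rfl
end
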